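/- arXiv:math/0610704 — 8 statements merged into one kernel-verified Lean document; each statement's English description precedes it below -/
import Mathlib

section
/- Let $\lambda=(\lambda_1,\ldots,\lambda_\ell)$ be a partition. The branching component graph $\mathcal{BC}(\lambda)$ (whose strata are indexed by the $\alpha_1$-height, ranging over integers from $\lambda_1$ down to $-\lambda_1$) has exactly $2\lambda_1+1$ strata, and the multiset of partitions labeling stratum $j$ equals the multiset labeling stratum $-j$ for all $0\le j\le\lambda_1$. -/
/-- A `±` diagram of outer shape `lam`: a chain of partitions `μ ⊆ ν ⊆ lam` such that
`ν/μ` and `lam/ν` are horizontal strips (`+`'s are placed in `ν/μ`, `−`'s in `lam/ν`).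
The inner shape `μ` labels the corresponding vertex of the branching component
graph. -/
structure PMDiagram (lam : YoungDiagram) where
  mu : YoungDiagram
  nu : YoungDiagram
  mu_le_nu : mu.cells ⊆ nu.cells
  nu_le_lam : nu.cells ⊆ lam.cells
  strip_plus : ∀ j, nu.colLen j ≤ mu.colLen j + 1
  strip_minus : ∀ j, lam.colLen j ≤ nu.colLen j + 1

/-- The stratum (`α₁`-height) of a vertex of the branching component graph:
number of `+`'s minus number of `−`'s of the corresponding `±` diagram. -/
def PMDiagram.stratum {lam : YoungDiagram} (D : PMDiagram lam) : ℤ :=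
  ((D.nu.card : ℤ) - (D.mu.card : ℤ)) - ((lam.card : ℤ) - (D.nu.card : ℤ))

/-!
In row coordinates the conditions on a `±` diagram `μ ⊆ ν ⊆ λ` decouple: for fixed `μ`, row `i`
of `ν` may be any length in `[max(μᵢ, λᵢ₊₁), min(λᵢ, μᵢ₋₁)]` (no constraint from `μ` on row `0`).
Reflecting every row of `ν` in its interval is an involution fixing `μ`, and since the endpoints
of the intervals add up, by telescoping, to `|μ| + |λ|`, it negates the stratum. A horizontal strip
inside `λ` has at most `λ₁` cells, so strata lie in `[-λ₁, λ₁]`; stratum `n ≥ 0` is attained with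
`ν = λ` and `μ` obtained by removing the bottom cells of the last `n` columns of `λ`, and the
negative strata are then attained by reflection.
-/

open Finset

namespace YoungDiagram

theorem rowLen_mono {μ ν : YoungDiagram} (h : μ ≤ ν) (i : ℕ) : μ.rowLen i ≤ ν.rowLen i := by
  by_contra! hlt
  exact (mem_iff_lt_rowLen.1 (h (mem_iff_lt_rowLen.2 hlt))).false

theorem colLen_mono {μ ν : YoungDiagram} (h : μ ≤ ν) (j : ℕ) : μ.colLen j ≤ ν.colLen j := by
  by_contra! hlt
  exact (mem_iff_lt_colLen.1 (h (mem_iff_lt_colLen.2 hlt))).false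

theorem le_iff_rowLen_le {μ ν : YoungDiagram} : μ ≤ ν ↔ ∀ i, μ.rowLen i ≤ ν.rowLen i :=
  ⟨rowLen_mono, fun h ⟨i, _⟩ hc => mem_iff_lt_rowLen.2 ((mem_iff_lt_rowLen.1 hc).trans_le (h i))⟩

theorem ext_rowLen {μ ν : YoungDiagram} (h : ∀ i, μ.rowLen i = ν.rowLen i) : μ = ν :=
  le_antisymm (le_iff_rowLen_le.2 fun i => (h i).le) (le_iff_rowLen_le.2 fun i => (h i).ge)

theorem colLen_le_colLen_add_one_iff {μ ν : YoungDiagram} :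
    (∀ j, ν.colLen j ≤ μ.colLen j + 1) ↔ ∀ i, ν.rowLen (i + 1) ≤ μ.rowLen i := by
  trans ∀ i j, (i + 1, j) ∈ ν → (i, j) ∈ μ
  · simp only [mem_iff_lt_colLen]
    refine ⟨fun h i j hij => by have := h j; omega, fun h j => ?_⟩
    by_contra! hlt
    have := h (ν.colLen j - 2) j (by omega)
    omega
  · simp only [mem_iff_lt_rowLen]
    refine ⟨fun h i => ?_, fun h i j hij => hij.trans_le (h i)⟩
    by_contra! hlt
    exact (h i _ hlt).false

theorem rowLen_eq_zero {μ : YoungDiagram} {i : ℕ} (h : μ.colLen 0 ≤ i) : μ.rowLen i = 0 := by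
  by_contra hne
  have := mem_iff_lt_colLen.1 (mem_iff_lt_rowLen.2 (Nat.pos_of_ne_zero hne))
  omega

theorem card_eq_sum_rowLen (μ : YoungDiagram) {n : ℕ} (hn : μ.colLen 0 ≤ n) :
    μ.card = ∑ i ∈ range n, μ.rowLen i := by
  rw [YoungDiagram.card, card_eq_sum_card_fiberwise (f := Prod.fst) (t := range n)]
  · exact sum_congr rfl fun i _ => (μ.rowLen_eq_card).symm
  · rintro ⟨i, j⟩ hc
    have : (i, 0) ∈ μ := μ.up_left_mem le_rfl (Nat.zero_le j) ((mem_cells _).1 hc)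
    exact mem_range.2 ((mem_iff_lt_colLen.1 this).trans_le hn)

theorem card_le_card_add_rowLen_zero {μ ν : YoungDiagram}
    (h : ∀ i, ν.rowLen (i + 1) ≤ μ.rowLen i) : ν.card ≤ μ.card + ν.rowLen 0 := by
  set n := μ.colLen 0 + ν.colLen 0
  rw [ν.card_eq_sum_rowLen (n := n + 1) (by omega), μ.card_eq_sum_rowLen (n := n) (by omega),
    sum_range_succ']
  have := sum_le_sum fun i (_ : i ∈ range n) => h i
  omega

def restrictRows (lam : YoungDiagram) (N : ℕ → ℕ) (hN : Antitone N) : YoungDiagram where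
  cells := lam.cells.filter fun c => c.2 < N c.1
  isLowerSet := by
    rintro ⟨i, j⟩ ⟨i', j'⟩ ⟨hi, hj⟩ hc
    simp only [coe_filter, Set.mem_ofPred_eq, mem_cells] at hc ⊢
    exact ⟨lam.up_left_mem hi hj hc.1, hj.trans_lt (hc.2.trans_le (hN hi))⟩

section restrictRows

variable {lam : YoungDiagram} {N : ℕ → ℕ} {hN : Antitone N}

theorem mem_restrictRows {i j : ℕ} : (i, j) ∈ restrictRows lam N hN ↔ (i, j) ∈ lam ∧ j < N i :=
  (mem_cells _).symm.trans (mem_filter.trans (and_congr_left' (mem_cells _)))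

theorem rowLen_restrictRows (i : ℕ) :
    (restrictRows lam N hN).rowLen i = min (lam.rowLen i) (N i) :=
  eq_of_forall_lt_iff fun j => by
    rw [← mem_iff_lt_rowLen, mem_restrictRows, mem_iff_lt_rowLen, lt_min_iff]

end restrictRows

/-- Removes the bottom cell of every column of index at least `c`. -/
def dropColumnBottoms (lam : YoungDiagram) (c : ℕ) : YoungDiagram :=
  restrictRows lam (fun i => max (lam.rowLen (i + 1)) c)
    fun _ _ h => max_le_max_right c (lam.rowLen_anti _ _ (Nat.succ_le_succ h))

theorem card_dropColumnBottoms (lam : YoungDiagram) (c : ℕ) :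
    (lam.dropColumnBottoms c).card + (lam.rowLen 0 - c) = lam.card := by
  have hbottom : lam.cells.filter (fun x => ¬ x.2 < max (lam.rowLen (x.1 + 1)) c) =
      (Ico c (lam.rowLen 0)).image fun j => (lam.colLen j - 1, j) := by
    ext ⟨i, j⟩
    have h0 : j < lam.rowLen 0 ↔ 0 < lam.colLen j := by
      rw [← mem_iff_lt_rowLen, mem_iff_lt_colLen]
    have h1 : j < lam.rowLen (i + 1) ↔ i + 1 < lam.colLen j := by
      rw [← mem_iff_lt_rowLen, mem_iff_lt_colLen]
    simp only [mem_filter, mem_image, mem_Ico, mem_cells, mem_iff_lt_colLen, lt_max_iff, h1,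
      Prod.mk.injEq]
    constructor
    · rintro ⟨hi, hj⟩
      exact ⟨j, by omega⟩
    · rintro ⟨j, hj, rfl, rfl⟩
      omega
  have := card_filter_add_card_filter_not (s := lam.cells)
    (fun x => x.2 < max (lam.rowLen (x.1 + 1)) c)
  rw [hbottom, card_image_of_injective _ fun _ _ h => (Prod.ext_iff.1 h).2, Nat.card_Ico] at this
  exact this

end YoungDiagram

open YoungDiagram

namespace PMDiagram

def rowLower (lam mu : YoungDiagram) (i : ℕ) : ℕ :=
  max (mu.rowLen i) (lam.rowLen (i + 1))

def rowUpper (lam mu : YoungDiagram) : ℕ → ℕ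
  | 0 => lam.rowLen 0
  | i + 1 => min (lam.rowLen (i + 1)) (mu.rowLen i)

theorem rowUpper_le_rowLen (lam mu : YoungDiagram) : ∀ i, rowUpper lam mu i ≤ lam.rowLen i
  | 0 => le_rfl
  | _ + 1 => min_le_left _ _

theorem rowUpper_succ_le_rowLower (lam mu : YoungDiagram) (i : ℕ) :
    rowUpper lam mu (i + 1) ≤ rowLower lam mu i :=
  (min_le_right _ _).trans (le_max_left _ _)

theorem sum_rowLower_add_rowUpper {lam mu : YoungDiagram} (hmu : mu ≤ lam) :
    ∑ i ∈ range (lam.colLen 0 + 1), (rowLower lam mu i + rowUpper lam mu i) =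
      mu.card + lam.card := by
  set n := lam.colLen 0
  have hmu_n : mu.rowLen n = 0 := rowLen_eq_zero (colLen_mono hmu 0)
  have hlam_n : lam.rowLen (n + 1) = 0 := rowLen_eq_zero (Nat.le_succ n)
  rw [mu.card_eq_sum_rowLen (n := n + 1) (colLen_mono hmu 0 |>.trans n.le_succ),
    lam.card_eq_sum_rowLen (n := n + 1) n.le_succ, sum_add_distrib, sum_range_succ,
    sum_range_succ' (rowUpper lam mu), sum_range_succ mu.rowLen, sum_range_succ' lam.rowLen]
  have hpair := sum_congr rfl fun i (_ : i ∈ range n) => show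
      rowLower lam mu i + rowUpper lam mu (i + 1) = mu.rowLen i + lam.rowLen (i + 1) by
    rw [rowLower, rowUpper, min_comm, max_add_min]
  have hlower_n : rowLower lam mu n = 0 := by rw [rowLower, hmu_n, hlam_n, max_self]
  rw [sum_add_distrib, sum_add_distrib] at hpair
  rw [hlower_n, hmu_n, rowUpper]
  omega

variable {lam : YoungDiagram}

theorem rowLower_le_rowLen_nu (D : PMDiagram lam) (i : ℕ) :
    rowLower lam D.mu i ≤ D.nu.rowLen i :=
  max_le (rowLen_mono D.mu_le_nu i) (colLen_le_colLen_add_one_iff.1 D.strip_minus i)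

theorem rowLen_nu_le_rowUpper (D : PMDiagram lam) : ∀ i, D.nu.rowLen i ≤ rowUpper lam D.mu i
  | 0 => rowLen_mono D.nu_le_lam 0
  | i + 1 => le_min (rowLen_mono D.nu_le_lam (i + 1))
      (colLen_le_colLen_add_one_iff.1 D.strip_plus i)

def ofRowBounds (mu nu : YoungDiagram) (hlo : ∀ i, rowLower lam mu i ≤ nu.rowLen i)
    (hup : ∀ i, nu.rowLen i ≤ rowUpper lam mu i) : PMDiagram lam where
  mu := mu
  nu := nu
  mu_le_nu := le_iff_rowLen_le.2 fun i => (le_max_left _ _).trans (hlo i)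
  nu_le_lam := le_iff_rowLen_le.2 fun i => (hup i).trans (rowUpper_le_rowLen lam mu i)
  strip_plus := colLen_le_colLen_add_one_iff.2 fun i => (hup (i + 1)).trans (min_le_right _ _)
  strip_minus := colLen_le_colLen_add_one_iff.2 fun i => (le_max_right _ _).trans (hlo i)

theorem ext {D E : PMDiagram lam} (hmu : D.mu = E.mu) (hnu : D.nu = E.nu) : D = E := by
  cases D; cases E; cases hmu; cases hnu; rfl

def reflectNu (D : PMDiagram lam) : YoungDiagram :=
  restrictRows lam (fun i => rowLower lam D.mu i + rowUpper lam D.mu i - D.nu.rowLen i) <|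
    antitone_nat_of_succ_le fun i => by
      have := rowUpper_succ_le_rowLower lam D.mu i
      have := D.rowLower_le_rowLen_nu (i + 1)
      have := D.rowLen_nu_le_rowUpper i
      omega

theorem rowLen_reflectNu (D : PMDiagram lam) (i : ℕ) :
    D.reflectNu.rowLen i = rowLower lam D.mu i + rowUpper lam D.mu i - D.nu.rowLen i := by
  have := rowUpper_le_rowLen lam D.mu i
  have := D.rowLower_le_rowLen_nu i
  rw [reflectNu, rowLen_restrictRows]
  omega

def reflect (D : PMDiagram lam) : PMDiagram lam :=
  ofRowBounds D.mu D.reflectNu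
    (fun i => by have := D.rowLen_nu_le_rowUpper i; rw [rowLen_reflectNu]; omega)
    (fun i => by have := D.rowLower_le_rowLen_nu i; rw [rowLen_reflectNu]; omega)

theorem reflect_mu (D : PMDiagram lam) : D.reflect.mu = D.mu := rfl

theorem reflect_nu (D : PMDiagram lam) : D.reflect.nu = D.reflectNu := rfl

theorem reflect_involutive : Function.Involutive (reflect (lam := lam)) := fun D =>
  ext rfl <| ext_rowLen fun i => by
    have := D.rowLower_le_rowLen_nu i
    have := D.rowLen_nu_le_rowUpper i
    rw [reflect_nu, rowLen_reflectNu, reflect_mu, reflect_nu, rowLen_reflectNu]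
    omega

theorem stratum_reflect (D : PMDiagram lam) : D.reflect.stratum = -D.stratum := by
  have hsum := sum_congr rfl fun i (_ : i ∈ range (lam.colLen 0 + 1)) => show
      D.reflect.nu.rowLen i + D.nu.rowLen i = rowLower lam D.mu i + rowUpper lam D.mu i by
    have := D.rowLower_le_rowLen_nu i
    have := D.rowLen_nu_le_rowUpper i
    rw [reflect_nu, rowLen_reflectNu]
    omega
  rw [sum_add_distrib, sum_rowLower_add_rowUpper (D.mu_le_nu.trans D.nu_le_lam),
    ← card_eq_sum_rowLen _ ((colLen_mono D.reflect.nu_le_lam 0).trans (Nat.le_succ _)),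
    ← card_eq_sum_rowLen _ ((colLen_mono D.nu_le_lam 0).trans (Nat.le_succ _))] at hsum
  unfold stratum
  rw [reflect_mu]
  omega

theorem stratum_mem_Icc (D : PMDiagram lam) :
    D.stratum ∈ Set.Icc (-(lam.rowLen 0 : ℤ)) (lam.rowLen 0) := by
  have := card_le_card_add_rowLen_zero (colLen_le_colLen_add_one_iff.1 D.strip_plus)
  have := card_le_card_add_rowLen_zero (colLen_le_colLen_add_one_iff.1 D.strip_minus)
  have := rowLen_mono D.nu_le_lam 0
  have : D.mu.card ≤ D.nu.card := card_le_card D.mu_le_nu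
  have : D.nu.card ≤ lam.card := card_le_card D.nu_le_lam
  rw [stratum, Set.mem_Icc]
  omega

theorem exists_stratum_eq_natCast {n : ℕ} (hn : n ≤ lam.rowLen 0) :
    ∃ D : PMDiagram lam, D.stratum = n := by
  have hcard := lam.card_dropColumnBottoms (lam.rowLen 0 - n)
  set mu := lam.dropColumnBottoms (lam.rowLen 0 - n)
  have hmu (i : ℕ) : mu.rowLen i = min (lam.rowLen i) (max (lam.rowLen (i + 1)) _) :=
    rowLen_restrictRows i
  have hanti (i : ℕ) := lam.rowLen_anti i (i + 1) i.le_succ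
  refine ⟨ofRowBounds mu lam (fun i => max_le ?_ (hanti i)) fun i => ?_, ?_⟩
  · exact (hmu i).trans_le (min_le_left _ _)
  · cases i with
    | zero => exact le_rfl
    | succ i => exact le_min le_rfl ((le_min (hanti i) (le_max_left _ _)).trans_eq (hmu i).symm)
  · change ((lam.card : ℤ) - mu.card) - (lam.card - lam.card) = n
    omega

theorem range_stratum :
    Set.range (stratum (lam := lam)) = Set.Icc (-(lam.rowLen 0 : ℤ)) (lam.rowLen 0) := by
  refine Set.Subset.antisymm (Set.range_subset_iff.2 stratum_mem_Icc) fun z ⟨hlo, hhi⟩ => ?_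
  obtain ⟨n, rfl | rfl⟩ := Int.eq_nat_or_neg z
  · exact exists_stratum_eq_natCast (by omega)
  · obtain ⟨D, hD⟩ := exists_stratum_eq_natCast (lam := lam) (n := n) (by omega)
    exact ⟨D.reflect, by rw [stratum_reflect, hD]⟩

theorem ncard_stratum_eq_neg (j : ℤ) (mu : YoungDiagram) :
    {D : PMDiagram lam | D.stratum = j ∧ D.mu = mu}.ncard =
      {D : PMDiagram lam | D.stratum = -j ∧ D.mu = mu}.ncard := by
  have hpre : {D : PMDiagram lam | D.stratum = j ∧ D.mu = mu} =
      reflect ⁻¹' {D | D.stratum = -j ∧ D.mu = mu} := by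
    ext D
    simp only [Set.mem_preimage, Set.mem_ofPred_eq, stratum_reflect, neg_inj, reflect_mu]
  rw [hpre, Set.ncard_preimage_of_injective_subset_range reflect_involutive.injective]
  exact reflect_involutive.surjective.range_eq ▸ Set.subset_univ _

end PMDiagram

/-- For a partition `λ`, the branching component graph `𝓑𝓒(λ)`
(vertices = `±` diagrams of outer shape `λ`, strata = `α₁`-heights) has exactly
`2λ₁ + 1` strata — the set of strata is the interval `[-λ₁, λ₁]` — and for every
`0 ≤ j ≤ λ₁` the multiset of partitions labeling stratum `j` equals the multiset
labeling stratum `-j`. -/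
theorem branching_component_strata_symmetry (lam : YoungDiagram) :
    ({z : ℤ | ∃ D : PMDiagram lam, D.stratum = z} =
      Set.Icc (-(lam.rowLen 0 : ℤ)) (lam.rowLen 0 : ℤ)) ∧
    (∀ j : ℤ, 0 ≤ j → j ≤ (lam.rowLen 0 : ℤ) → ∀ mu : YoungDiagram,
      {D : PMDiagram lam | D.stratum = j ∧ D.mu = mu}.ncard =
      {D : PMDiagram lam | D.stratum = -j ∧ D.mu = mu}.ncard) :=
  ⟨PMDiagram.range_stratum, fun j _ _ mu => PMDiagram.ncard_stratum_eq_neg j mu⟩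
end

section
/- For height-two rectangular tableaux, condition (4) of the $D_n$ tableau criterion — forbidding $\binom{n-1}{n}\cdots\binom{n}{\overline{n-1}}$ and $\binom{n-1}{\bar n}\cdots\binom{\bar n}{\overline{n-1}}$ with arbitrary intermediate columns — is equivalent to condition (4a) forbidding only the adjacent configurations $\binom{n-1}{n}\binom{n}{\overline{n-1}}$ and $\binom{n-1}{\bar n}\binom{\bar n}{\overline{n-1}}$, given conditions (1), (2), (3). -/
/-! Type `D_n` alphabet `1 < 2 < ⋯ < n-1 < {n, n̄} < n-1̄ < ⋯ < 1̄`.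
A letter is a nonzero integer `x` with `-n ≤ x ≤ n`; the barred letter `ā` is `-a`. -/

/-- Position of a letter in the type `Dₙ` alphabet. -/
def dpos (n : ℕ) (x : ℤ) : ℤ := if 0 < x then x else 2 * (n : ℤ) + x

/-- The partial order on the type `Dₙ` alphabet: `n` and `n̄ = -n` are incomparable. -/
def dle (n : ℕ) (x y : ℤ) : Prop := x = y ∨ dpos n x < dpos n y

def isDLetter (n : ℕ) (x : ℤ) : Prop := x ≠ 0 ∧ -(n : ℤ) ≤ x ∧ x ≤ (n : ℤ)

/-- A height-two filling of a `2 × s` rectangle satisfying conditions (1) (rows weakly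
increase) and (2) (in each column `(a/b)`, `b ≰ a`) of the height-two criterion. -/
structure Height2 (n s : ℕ) where
  top : ℕ → ℤ
  bot : ℕ → ℤ
  letter_top : ∀ i < s, isDLetter n (top i)
  letter_bot : ∀ i < s, isDLetter n (bot i)
  row_top : ∀ i j, i ≤ j → j < s → dle n (top i) (top j)
  row_bot : ∀ i j, i ≤ j → j < s → dle n (bot i) (bot j)
  col : ∀ i < s, ¬ dle n (bot i) (top i)

/-- Condition (3): no configuration `(a/·)(a/ā)` or `(a/ā)(·/ā)` in adjacent columns. -/
def cond3 {n s : ℕ} (T : Height2 n s) : Prop :=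
  ∀ i, i + 1 < s →
    ¬ (T.top i = T.top (i + 1) ∧ T.bot (i + 1) = -T.top (i + 1)) ∧
    ¬ (T.bot i = T.bot (i + 1) ∧ T.top i = -T.bot i)

/-- Condition (4a): no adjacent configuration `(n-1/n)(n/\overline{n-1})` or
`(n-1/n̄)(n̄/\overline{n-1})`. -/
def cond4a {n s : ℕ} (T : Height2 n s) : Prop :=
  ∀ i, i + 1 < s →
    ¬ (T.top i = (n : ℤ) - 1 ∧ T.bot i = (n : ℤ) ∧
        T.top (i + 1) = (n : ℤ) ∧ T.bot (i + 1) = -((n : ℤ) - 1)) ∧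
    ¬ (T.top i = (n : ℤ) - 1 ∧ T.bot i = -(n : ℤ) ∧
        T.top (i + 1) = -(n : ℤ) ∧ T.bot (i + 1) = -((n : ℤ) - 1))

/-- Condition (4): no configuration `(n-1/n) ⋯ (n/\overline{n-1})` or
`(n-1/n̄) ⋯ (n̄/\overline{n-1})` with arbitrarily many intermediate columns. -/
def cond4 {n s : ℕ} (T : Height2 n s) : Prop :=
  ∀ i j, i < j → j < s →
    ¬ (T.top i = (n : ℤ) - 1 ∧ T.bot i = (n : ℤ) ∧
        T.top j = (n : ℤ) ∧ T.bot j = -((n : ℤ) - 1)) ∧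
    ¬ (T.top i = (n : ℤ) - 1 ∧ T.bot i = -(n : ℤ) ∧
        T.top j = -(n : ℤ) ∧ T.bot j = -((n : ℤ) - 1))

/-- Condition (5): no column `(1/1̄)`. -/
def cond5 {n s : ℕ} (T : Height2 n s) : Prop := ∀ i < s, ¬ (T.top i = 1 ∧ T.bot i = -1)

/-- Classical height-two tableaux: all five conditions of the height-two criterion
(conditions (1),(2) are part of `Height2`); these index `B(sϖ₂)`. -/
def classicalTab {n s : ℕ} (T : Height2 n s) : Prop := cond3 T ∧ cond4a T ∧ cond5 T

/-- Affine tableaux `𝒯(s)`: conditions (1),(2),(4) only. -/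
def affineTab {n s : ℕ} (T : Height2 n s) : Prop := cond4a T


lemma dle_squeeze1 (n : ℕ) (hn : 2 ≤ n) (x : ℤ) (hx : isDLetter n x)
    (h1 : dle n ((n:ℤ)-1) x) (h2 : dle n x (n:ℤ)) : x = (n:ℤ)-1 ∨ x = (n:ℤ) := by
  obtain ⟨hx0, hxl, hxr⟩ := hx
  simp only [dle, dpos] at h1 h2
  split_ifs at h1 h2 <;> omega

lemma dle_squeeze2 (n : ℕ) (hn : 2 ≤ n) (x : ℤ) (hx : isDLetter n x)
    (h1 : dle n (n:ℤ) x) (h2 : dle n x (-((n:ℤ)-1))) : x = (n:ℤ) ∨ x = -((n:ℤ)-1) := by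
  obtain ⟨hx0, hxl, hxr⟩ := hx
  simp only [dle, dpos] at h1 h2
  split_ifs at h1 h2 <;> omega

lemma dle_squeeze3 (n : ℕ) (hn : 2 ≤ n) (x : ℤ) (hx : isDLetter n x)
    (h1 : dle n ((n:ℤ)-1) x) (h2 : dle n x (-(n:ℤ))) : x = (n:ℤ)-1 ∨ x = -(n:ℤ) := by
  obtain ⟨hx0, hxl, hxr⟩ := hx
  simp only [dle, dpos] at h1 h2
  split_ifs at h1 h2 <;> omega

lemma dle_squeeze4 (n : ℕ) (hn : 2 ≤ n) (x : ℤ) (hx : isDLetter n x)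
    (h1 : dle n (-(n:ℤ)) x) (h2 : dle n x (-((n:ℤ)-1))) : x = -(n:ℤ) ∨ x = -((n:ℤ)-1) := by
  obtain ⟨hx0, hxl, hxr⟩ := hx
  simp only [dle, dpos] at h1 h2
  split_ifs at h1 h2 <;> omega

lemma cond4_aux (n s : ℕ) (hn : 2 ≤ n) (T : Height2 n s) (h3 : cond3 T) (h4a : cond4a T) :
    ∀ d i j, j = i + d + 1 → j < s →
      ¬ (T.top i = (n : ℤ) - 1 ∧ T.bot i = (n : ℤ) ∧
          T.top j = (n : ℤ) ∧ T.bot j = -((n : ℤ) - 1)) ∧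
      ¬ (T.top i = (n : ℤ) - 1 ∧ T.bot i = -(n : ℤ) ∧
          T.top j = -(n : ℤ) ∧ T.bot j = -((n : ℤ) - 1)) := by
  intro d
  induction d with
  | zero => intro i j hj hjs; subst hj; exact h4a i hjs
  | succ d ih =>
    intro i j hj hjs
    subst hj
    have hl1 := T.letter_top (i+1) (by omega)
    have hl2 := T.letter_bot (i+1) (by omega)
    have h1 := T.row_top i (i+1) (by omega) (by omega)
    have h2 := T.row_top (i+1) (i+(d+1)+1) (by omega) hjs
    have h1' := T.row_bot i (i+1) (by omega) (by omega)
    have h2' := T.row_bot (i+1) (i+(d+1)+1) (by omega) hjs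
    constructor
    · rintro ⟨ht, hb, htj, hbj⟩
      rw [ht] at h1; rw [htj] at h2; rw [hb] at h1'; rw [hbj] at h2'
      rcases dle_squeeze1 n hn _ hl1 h1 h2 with ht1 | ht1 <;>
        rcases dle_squeeze2 n hn _ hl2 h1' h2' with hb1 | hb1
      · exact (ih (i+1) (i+(d+1)+1) (by omega) hjs).1 ⟨ht1, hb1, htj, hbj⟩
      · exact (h3 i (by omega)).1 ⟨by rw [ht, ht1], by rw [hb1, ht1]⟩
      · exact T.col (i+1) (by omega) (by rw [ht1, hb1]; exact Or.inl rfl)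
      · exact (h4a i (by omega)).1 ⟨ht, hb, ht1, hb1⟩
    · rintro ⟨ht, hb, htj, hbj⟩
      rw [ht] at h1; rw [htj] at h2; rw [hb] at h1'; rw [hbj] at h2'
      rcases dle_squeeze3 n hn _ hl1 h1 h2 with ht1 | ht1 <;>
        rcases dle_squeeze4 n hn _ hl2 h1' h2' with hb1 | hb1
      · exact (ih (i+1) (i+(d+1)+1) (by omega) hjs).2 ⟨ht1, hb1, htj, hbj⟩
      · exact (h3 i (by omega)).1 ⟨by rw [ht, ht1], by rw [hb1, ht1]⟩
      · exact T.col (i+1) (by omega) (by rw [ht1, hb1]; exact Or.inl rfl)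
      · exact (h4a i (by omega)).2 ⟨ht, hb, ht1, hb1⟩

/-- For height-two rectangular tableaux satisfying conditions
(1), (2), (3), condition (4) (with arbitrary intermediate columns) is equivalent
to condition (4a) (adjacent columns only). -/
theorem cond4_iff_cond4a (n s : ℕ) (hn : 2 ≤ n) (T : Height2 n s) (h3 : cond3 T) :
    cond4 T ↔ cond4a T := by
  constructor
  · intro h4 i hi
    exact h4 i (i+1) (by omega) hi
  · intro h4a i j hij hjs
    obtain ⟨d, rfl⟩ : ∃ d, j = i + d + 1 := ⟨j - i - 1, by omega⟩
    exact cond4_aux n s hn T h3 h4a d i _ rfl hjs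
end

section
/- Let $T\in\mathcal{T}(s)\setminus B(s\varpi_2)$ with $T\neq\binom{1}{\bar1}\cdots\binom{1}{\bar1}$. Then there exist a unique letter $a\in\{1,\ldots,n,\bar n\}$ and a unique maximal $m\in\mathbb{Z}_{>0}$ such that $T$ contains an $a$-configuration: a maximal run of $m$ (or $m+1$) consecutive columns all equal to $\binom{a}{\bar a}$, bounded as in the three cases of the definition; moreover $T$ contains no other $a'$-configuration. -/
/-- A maximal run of `m` consecutive columns `(a/ā)` starting at column `i`. -/
def maxRun {n s : ℕ} (T : Height2 n s) (a : ℤ) (i m : ℕ) : Prop :=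
  0 < m ∧ i + m ≤ s ∧ (∀ k < m, T.top (i + k) = a ∧ T.bot (i + k) = -a) ∧
  (i = 0 ∨ ¬ (T.top (i - 1) = a ∧ T.bot (i - 1) = -a)) ∧
  (i + m = s ∨ ¬ (T.top (i + m) = a ∧ T.bot (i + m) = -a))

/-- An `a`-configuration of size `m` starting at column `i`: a maximal run of
columns `(a/ā)`, bounded as in the three cases of the definition: either the run has
length `m` and is preceded by a column with top entry `a` or followed by a column with
bottom entry `ā` (cases 1 and 2), or the run has length `m + 1` and neither happens
(case 3).  Here `a ∈ {1, …, n, n̄}`. -/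
def aConfig {n s : ℕ} (T : Height2 n s) (a : ℤ) (i m : ℕ) : Prop :=
  ((1 ≤ a ∧ a ≤ (n : ℤ)) ∨ a = -(n : ℤ)) ∧ 0 < m ∧
  ((maxRun T a i m ∧
      ((0 < i ∧ T.top (i - 1) = a) ∨ (i + m < s ∧ T.bot (i + m) = -a))) ∨
   (maxRun T a i (m + 1) ∧
      ¬ (0 < i ∧ T.top (i - 1) = a) ∧ ¬ (i + m + 1 < s ∧ T.bot (i + m + 1) = -a)))

lemma ac_dpos_pos {n : ℕ} {x : ℤ} (hx : isDLetter n x) : 1 ≤ dpos n x := by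
  obtain ⟨h0, h1, h2⟩ := hx
  unfold dpos; split <;> omega

lemma ac_dpos_le {n : ℕ} {x : ℤ} (hx : isDLetter n x) : dpos n x ≤ 2 * n - 1 := by
  obtain ⟨h0, h1, h2⟩ := hx
  unfold dpos; split <;> omega

lemma ac_dpos_neg {n : ℕ} {x : ℤ} (hx : x ≠ 0) : dpos n (-x) = 2 * n - dpos n x := by
  unfold dpos; split <;> split <;> omega

lemma ac_between {n s : ℕ} (T : Height2 n s) {a : ℤ} {i k j : ℕ}
    (hik : i ≤ k) (hkj : k ≤ j) (hj : j < s)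
    (hi : T.top i = a ∧ T.bot i = -a) (hjs : T.top j = a ∧ T.bot j = -a) :
    T.top k = a ∧ T.bot k = -a := by
  have hks : k < s := lt_of_le_of_lt hkj hj
  have h1 := T.row_top i k hik hks
  have h2 := T.row_top k j hkj hj
  have h3 := T.row_bot i k hik hks
  have h4 := T.row_bot k j hkj hj
  rw [hi.1] at h1; rw [hjs.1] at h2; rw [hi.2] at h3; rw [hjs.2] at h4
  unfold dle at h1 h2 h3 h4
  constructor
  · rcases h1 with h | h
    · exact h.symm
    rcases h2 with h' | h'
    · exact h'
    · exact absurd h' (lt_asymm h)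
  · rcases h3 with h | h
    · exact h.symm
    rcases h4 with h' | h'
    · exact h'
    · exact absurd h' (lt_asymm h)

lemma ac_sameLetter {n s : ℕ} (T : Height2 n s) {i j : ℕ} (hij : i ≤ j) (hj : j < s)
    (hi : T.bot i = -T.top i) (hjs : T.bot j = -T.top j) : T.top i = T.top j := by
  rcases eq_or_lt_of_le hij with rfl | hlt
  · rfl
  have hi' : i < s := lt_trans hlt hj
  have h0 : T.top i ≠ 0 := (T.letter_top i hi').1
  have h0' : T.top j ≠ 0 := (T.letter_top j hj).1
  have h1 := T.row_top i j hij hj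
  have h2 := T.row_bot i j hij hj
  rw [hi, hjs] at h2
  unfold dle at h1 h2
  rw [ac_dpos_neg h0, ac_dpos_neg h0'] at h2
  rcases h1 with h | h
  · exact h
  rcases h2 with h' | h'
  · exact neg_injective h'
  · exfalso; linarith

lemma ac_letterRange {n s : ℕ} (T : Height2 n s) {i : ℕ} (hi : i < s)
    (hsym : T.bot i = -T.top i) : (1 ≤ T.top i ∧ T.top i ≤ (n : ℤ)) ∨ T.top i = -(n : ℤ) := by
  have hc := T.col i hi
  obtain ⟨h0, h1, h2⟩ := T.letter_top i hi
  rw [hsym] at hc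
  have key : ¬ (dpos n (-T.top i) < dpos n (T.top i)) := fun h => hc (Or.inr h)
  rw [ac_dpos_neg h0] at key
  unfold dpos at key
  split at key <;> omega

/-- Every affine tableau `T ∈ 𝒯(s) ∖ B(sϖ₂)` other than
`(1/1̄)⋯(1/1̄)` contains a unique `a`-configuration: the letter `a`, the size `m`,
and the position are all uniquely determined. -/
theorem aConfig_existsUnique (n s : ℕ) (hn : 2 ≤ n) (T : Height2 n s)
    (hT : affineTab T) (hnotB : ¬ classicalTab T)
    (hne : ¬ ∀ i < s, T.top i = 1 ∧ T.bot i = -1) :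
    ∃! c : ℤ × ℕ × ℕ, aConfig T c.1 c.2.1 c.2.2 := by
  classical
  -- Step 1: there is a symmetric column
  have hsym_ex : ∃ i, i < s ∧ T.bot i = -T.top i := by
    by_contra hno
    push_neg at hno
    apply hnotB
    refine ⟨fun i hi => ⟨?_, ?_⟩, hT, fun i hi h => ?_⟩
    · rintro ⟨h1, h2⟩
      exact hno (i + 1) hi h2
    · rintro ⟨h1, h2⟩
      exact hno i (by omega) (by omega)
    · exact hno i hi (by omega)
  -- Step 2: the leftmost and rightmost symmetric columns
  obtain ⟨i₀, hi₀s, hi₀sym, hi₀min⟩ :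
      ∃ i₀, i₀ < s ∧ T.bot i₀ = -T.top i₀ ∧
        ∀ j, j < s → T.bot j = -T.top j → i₀ ≤ j := by
    refine ⟨Nat.find hsym_ex, (Nat.find_spec hsym_ex).1, (Nat.find_spec hsym_ex).2,
      fun j h1 h2 => Nat.find_min' hsym_ex ⟨h1, h2⟩⟩
  obtain ⟨e, hes, hesym, hemax⟩ :
      ∃ e, e < s ∧ T.bot e = -T.top e ∧
        ∀ j, j < s → T.bot j = -T.top j → j ≤ e := by
    have hspec := Nat.findGreatest_spec (P := fun i => i < s ∧ T.bot i = -T.top i)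
      (le_of_lt hi₀s) ⟨hi₀s, hi₀sym⟩
    refine ⟨Nat.findGreatest (fun i => i < s ∧ T.bot i = -T.top i) s,
      hspec.1, hspec.2,
      fun j h1 h2 => Nat.le_findGreatest (le_of_lt h1) ⟨h1, h2⟩⟩
  have hi₀e : i₀ ≤ e := hi₀min e hes hesym
  obtain ⟨a, hadef⟩ : ∃ a, T.top i₀ = a := ⟨_, rfl⟩
  have hboti₀ : T.bot i₀ = -a := by rw [hi₀sym, hadef]
  have ha_range : (1 ≤ a ∧ a ≤ (n : ℤ)) ∨ a = -(n : ℤ) := by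
    rw [← hadef]; exact ac_letterRange T hi₀s hi₀sym
  have anySym : ∀ j, j < s → T.bot j = -T.top j → T.top j = a ∧ T.bot j = -a := by
    intro j hj hsj
    have hle : i₀ ≤ j := hi₀min j hj hsj
    have h := ac_sameLetter T hle hj hi₀sym hsj
    rw [hadef] at h
    exact ⟨h.symm, by rw [hsj, h]⟩
  have allA : ∀ k, i₀ ≤ k → k ≤ e → T.top k = a ∧ T.bot k = -a := by
    intro k h1 h2
    exact ac_between T h1 h2 hes ⟨hadef, hboti₀⟩ (anySym e hes hesym)
  obtain ⟨m, him⟩ : ∃ m, i₀ + m = e + 1 := ⟨e + 1 - i₀, by omega⟩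
  have hm1 : 0 < m := by omega
  have hrun : maxRun T a i₀ m := by
    refine ⟨hm1, by omega, ?_, ?_, ?_⟩
    · intro k hk
      exact allA (i₀ + k) (by omega) (by omega)
    · rcases Nat.eq_zero_or_pos i₀ with h | h
      · exact Or.inl h
      · refine Or.inr ?_
        rintro ⟨h1, h2⟩
        have : i₀ ≤ i₀ - 1 := hi₀min (i₀ - 1) (by omega) (by rw [h2, h1])
        omega
    · rcases eq_or_lt_of_le (show i₀ + m ≤ s by omega) with h | h
      · exact Or.inl h
      · refine Or.inr ?_
        rintro ⟨h1, h2⟩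
        have : i₀ + m ≤ e := hemax (i₀ + m) h (by rw [h2, h1])
        omega
  -- Step 3: any maximal run coincides with the block
  have block : ∀ a' i' L, maxRun T a' i' L → a' = a ∧ i' = i₀ ∧ i' + L = i₀ + m := by
    intro a' i' L hr
    obtain ⟨hL, hLs, hall, hleft, hright⟩ := hr
    have h0 : T.top i' = a' ∧ T.bot i' = -a' := by simpa using hall 0 hL
    have hi's : i' < s := by omega
    have hsymi' : T.bot i' = -T.top i' := by rw [h0.1, h0.2]
    have ha' : a' = a := by
      have := (anySym i' hi's hsymi').1
      rw [h0.1] at this; exact this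
    rw [ha'] at hall hleft hright
    refine ⟨ha', ?_⟩
    have hlast : T.top (i' + (L - 1)) = a ∧ T.bot (i' + (L - 1)) = -a := hall (L - 1) (by omega)
    have hi₀i' : i₀ ≤ i' := hi₀min i' hi's hsymi'
    have hi'e : i' + (L - 1) ≤ e := by
      apply hemax (i' + (L - 1)) (by omega)
      rw [hlast.1, hlast.2]
    have hii : i' = i₀ := by
      by_contra hne'
      have h1 : 0 < i' := by omega
      have h2 := allA (i' - 1) (by omega) (by omega)
      rcases hleft with h | h
      · omega
      · exact h h2
    have hend : i' + L = e + 1 := by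
      by_contra hne'
      have h1 : i' + L ≤ e := by omega
      have h2 := allA (i' + L) (by omega) (by omega)
      rcases hright with h | h
      · omega
      · exact h h2
    exact ⟨hii, by omega⟩
  -- Step 4: case split on the boundary condition
  by_cases hside : (0 < i₀ ∧ T.top (i₀ - 1) = a) ∨ (i₀ + m < s ∧ T.bot (i₀ + m) = -a)
  · refine ⟨(a, i₀, m), ⟨ha_range, hm1, Or.inl ⟨hrun, hside⟩⟩, ?_⟩
    rintro ⟨a', i', m'⟩ ⟨hr', hm', hcase⟩
    rcases hcase with ⟨hrr, _⟩ | ⟨hrr, hn1, hn2⟩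
    · obtain ⟨e1, e2, e3⟩ := block a' i' m' hrr
      simp only [Prod.mk.injEq]
      exact ⟨e1, e2, by omega⟩
    · obtain ⟨e1, e2, e3⟩ := block a' i' (m' + 1) hrr
      exfalso
      have hmm : m' + 1 = m := by omega
      rcases hside with h | h
      · rw [e1, e2] at hn1
        exact hn1 h
      · rw [e1] at hn2
        apply hn2
        rw [show i' + m' + 1 = i₀ + m by omega]
        exact h
  · -- boundary condition fails: show m ≥ 2
    push_neg at hside
    have hm2 : 2 ≤ m := by
      by_contra hm2
      have hm1' : m = 1 := by omega
      have hee : e = i₀ := by omega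
      by_cases ha1 : a = 1
      · -- a = 1 : T must be the all-(1/1̄) tableau
        have hi₀0 : i₀ = 0 := by
          by_contra h0
          have h0' : 0 < i₀ := by omega
          have h1 := T.row_top (i₀ - 1) i₀ (by omega) hi₀s
          rw [hadef, ha1] at h1
          rcases h1 with h | h
          · exact (hside.1 h0') (by rw [h, ha1])
          · have := ac_dpos_pos (T.letter_top (i₀ - 1) (by omega))
            have hd1 : dpos n (1 : ℤ) = 1 := by unfold dpos; simp
            rw [hd1] at h; omega
        have hs1 : s = 1 := by
          by_contra hs'
          have h1' : i₀ + m < s := by omega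
          have h1 := T.row_bot i₀ (i₀ + m) (by omega) h1'
          rw [hboti₀, ha1] at h1
          rcases h1 with h | h
          · exact (hside.2 h1') (by rw [← h, ha1])
          · have := ac_dpos_le (T.letter_bot (i₀ + m) h1')
            have hd1 : dpos n (-1 : ℤ) = 2 * n - 1 := by unfold dpos; split <;> omega
            rw [hd1] at h; omega
        apply hne
        intro i hi
        have hii : i = i₀ := by omega
        rw [hii, hadef, hboti₀, ha1]
        exact ⟨rfl, rfl⟩
      · -- a ≠ 1 : T is classical, contradiction
        apply hnotB
        refine ⟨fun i hi => ⟨?_, ?_⟩, hT, fun i hi h => ?_⟩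
        · rintro ⟨h1, h2⟩
          have hsy := anySym (i + 1) hi h2
          have hip : i + 1 = i₀ := by
            have l1 : i₀ ≤ i + 1 := hi₀min (i + 1) hi h2
            have l2 : i + 1 ≤ e := hemax (i + 1) hi h2
            omega
          apply hside.1 (by omega)
          rw [show i₀ - 1 = i by omega, h1]
          exact hsy.1
        · rintro ⟨h1, h2⟩
          have hsi : T.bot i = -T.top i := by omega
          have hsy := anySym i (by omega) hsi
          have hip : i = i₀ := by
            have l1 : i₀ ≤ i := hi₀min i (by omega) hsi
            have l2 : i ≤ e := hemax i (by omega) hsi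
            omega
          apply hside.2 (by omega)
          rw [show i₀ + m = i + 1 by omega, ← h1]
          exact hsy.2
        · obtain ⟨h1, h2⟩ := h
          have hsi : T.bot i = -T.top i := by omega
          have hip : i = i₀ := by
            have l1 : i₀ ≤ i := hi₀min i hi hsi
            have l2 : i ≤ e := hemax i hi hsi
            omega
          apply ha1
          rw [← hadef, ← hip, h1]
    have hgoal : 0 < m - 1 := by omega
    refine ⟨(a, i₀, m - 1), ⟨ha_range, hgoal, Or.inr ⟨?_, ?_, ?_⟩⟩, ?_⟩
    · rw [show m - 1 + 1 = m by omega]; exact hrun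
    · exact fun h => hside.1 h.1 h.2
    · rw [show i₀ + (m - 1) + 1 = i₀ + m by omega]
      exact fun h => hside.2 h.1 h.2
    · rintro ⟨a', i', m'⟩ ⟨hr', hm', hcase⟩
      rcases hcase with ⟨hrr, hbd⟩ | ⟨hrr, hn1, hn2⟩
      · obtain ⟨e1, e2, e3⟩ := block a' i' m' hrr
        exfalso
        have hmm : m' = m := by omega
        rw [e1, e2, hmm] at hbd
        rcases hbd with h | h
        · exact hside.1 h.1 h.2
        · exact hside.2 h.1 h.2
      · obtain ⟨e1, e2, e3⟩ := block a' i' (m' + 1) hrr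
        simp only [Prod.mk.injEq]
        exact ⟨e1, e2, by omega⟩
end

section
/- Let $t=\binom{a_1}{b_1}\cdots\binom{a_k}{b_k}$ be a height-two classical tableau with $k<s$ that has no subtableau $\binom{a_i}{b_i}\binom{a_{i+1}}{b_{i+1}}$ satisfying the filling criterion $b_i\le\bar a_i\le b_{i+1}$ or $a_i\le\bar b_{i+1}\le a_{i+1}$. Then either appending $s-k$ copies of $\binom{a_k}{\bar a_k}$ or prepending $s-k$ copies of $\binom{\bar b_1}{b_1}$ produces a tableau in $\mathcal{T}(s)\setminus B(s\varpi_2)$. -/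
/-- The filling criterion for the adjacent pair of columns `i, i+1` of a height-two
tableau: `b_i ≤ ā_i ≤ b_{i+1}` or `a_i ≤ b̄_{i+1} ≤ a_{i+1}` (bars are negation). -/
def fillCrit {n k : ℕ} (t : Height2 n k) (i : ℕ) : Prop :=
  (dle n (t.bot i) (-(t.top i)) ∧ dle n (-(t.top i)) (t.bot (i + 1))) ∨
  (dle n (t.top i) (-(t.bot (i + 1))) ∧ dle n (-(t.bot (i + 1))) (t.top (i + 1)))

/-! Auxiliary lemmas. -/

lemma dpos_neg {n : ℕ} {x : ℤ} (hx : isDLetter n x) : dpos n (-x) = 2 * n - dpos n x := by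
  obtain ⟨h0, h1, h2⟩ := hx
  unfold dpos
  split_ifs <;> omega

lemma dpos_le_of_dle {n : ℕ} {x y : ℤ} (h : dle n x y) : dpos n x ≤ dpos n y := by
  rcases h with rfl | h
  · exact le_refl _
  · exact le_of_lt h

lemma dle_refl (n : ℕ) (x : ℤ) : dle n x x := Or.inl rfl

lemma dle_trans {n : ℕ} {x y z : ℤ} (h : dle n x y) (h' : dle n y z) : dle n x z := by
  rcases h with rfl | h
  · exact h'
  · rcases h' with rfl | h'
    · exact Or.inr h
    · exact Or.inr (h.trans h')

lemma dpos_inj {n : ℕ} {x y : ℤ} (hx : isDLetter n x) (hy : isDLetter n y)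
    (h : dpos n x = dpos n y) : x = y ∨ (x = n ∧ y = -n) ∨ (x = -n ∧ y = n) := by
  obtain ⟨a, b, c⟩ := hx; obtain ⟨d, e, f⟩ := hy
  unfold dpos at h
  split_ifs at h <;> omega

lemma isDLetter_neg {n : ℕ} {x : ℤ} (hx : isDLetter n x) : isDLetter n (-x) := by
  obtain ⟨a, b, c⟩ := hx
  exact ⟨by omega, by omega, by omega⟩

lemma dle_of_dpos_le {n : ℕ} {x y : ℤ} (hx : isDLetter n x) (hy : isDLetter n y)
    (h : dpos n x ≤ dpos n y) (h1 : ¬(x = n ∧ y = -n)) (h2 : ¬(x = -n ∧ y = n)) :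
    dle n x y := by
  rcases eq_or_lt_of_le h with he | hl
  · rcases dpos_inj hx hy he with rfl | h' | h'
    · exact Or.inl rfl
    · exact absurd h' h1
    · exact absurd h' h2
  · exact Or.inr hl

/-- If `dpos b ≤ dpos ā`, then `b ≤ ā` provided `a ≠ b` (columns are legal). -/
lemma lemA {n : ℕ} {a b : ℤ} (ha : isDLetter n a) (hb : isDLetter n b) (hab : a ≠ b)
    (h : dpos n b ≤ 2 * n - dpos n a) : dle n b (-a) := by
  refine dle_of_dpos_le hb (isDLetter_neg ha) (by rw [dpos_neg ha]; exact h) ?_ ?_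
  · rintro ⟨h1, h2⟩; exact hab (by omega)
  · rintro ⟨h1, h2⟩; exact hab (by omega)

/-- If `dpos b̄ ≤ dpos a`, then `b̄ ≤ a` provided `a ≠ b`. -/
lemma lemB {n : ℕ} {a b : ℤ} (ha : isDLetter n a) (hb : isDLetter n b) (hab : a ≠ b)
    (h : 2 * n - dpos n b ≤ dpos n a) : dle n (-b) a := by
  refine dle_of_dpos_le (isDLetter_neg hb) ha (by rw [dpos_neg hb]; exact h) ?_ ?_
  · rintro ⟨h1, h2⟩; exact hab (by omega)
  · rintro ⟨h1, h2⟩; exact hab (by omega)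

/-- Key dichotomy: either the last column supports appending `(a/ā)`, or the first
column supports prepending `(b̄/b)`. -/
lemma key_dichotomy {n k : ℕ} (hn : 2 ≤ n) (hk : 0 < k) (t : Height2 n k)
    (hnofill : ∀ i, i + 1 < k → ¬ fillCrit t i) :
    dle n (t.bot (k - 1)) (-(t.top (k - 1))) ∨ dle n (-(t.bot 0)) (t.top 0) := by
  by_contra hc
  push_neg at hc
  obtain ⟨h1, h2⟩ := hc
  unfold dle at h1 h2
  push_neg at h1 h2
  have hk1 : k - 1 < k := by omega
  rw [dpos_neg (t.letter_top (k - 1) hk1)] at h1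
  rw [dpos_neg (t.letter_bot 0 hk)] at h2
  have col' : ∀ i < k, t.top i ≠ t.bot i ∧ dpos n (t.top i) ≤ dpos n (t.bot i) := by
    intro i hi
    have := t.col i hi
    unfold dle at this
    push_neg at this
    exact ⟨fun h => this.1 h.symm, this.2⟩
  have main : ∀ i, i < k → dpos n (t.top i) + dpos n (t.bot i) ≤ 2 * n := by
    intro i
    induction i with
    | zero => intro _; omega
    | succ i ih =>
      intro hik
      have hik' : i < k := by omega
      have hsum := ih hik'
      have hfc := hnofill i hik
      unfold fillCrit at hfc
      have hA : dle n (t.bot i) (-(t.top i)) :=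
        lemA (t.letter_top i hik') (t.letter_bot i hik') (col' i hik').1 (by omega)
      have hnotL : ¬ dle n (-(t.top i)) (t.bot (i + 1)) := fun h => hfc (Or.inl ⟨hA, h⟩)
      by_contra hge
      push_neg at hge
      have hB : dle n (-(t.bot (i + 1))) (t.top (i + 1)) :=
        lemB (t.letter_top (i + 1) hik) (t.letter_bot (i + 1) hik) (col' (i + 1) hik).1
          (by omega)
      have hnotR : ¬ dle n (t.top i) (-(t.bot (i + 1))) := fun h => hfc (Or.inr ⟨h, hB⟩)
      unfold dle at hnotL hnotR
      push_neg at hnotL hnotR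
      rw [dpos_neg (t.letter_top i hik')] at hnotL
      rw [dpos_neg (t.letter_bot (i + 1) hik)] at hnotR
      have heq : dpos n (t.bot (i + 1)) = dpos n (-(t.top i)) := by
        rw [dpos_neg (t.letter_top i hik')]; omega
      rcases dpos_inj (t.letter_bot (i + 1) hik) (isDLetter_neg (t.letter_top i hik'))
          heq with he | ⟨hbn, han⟩ | ⟨hbn, han⟩
      · exact hnotL.1 he.symm
      · -- b_{i+1} = n, a_i = n
        have hai : t.top i = n := by omega
        have hq : dpos n (t.bot (i + 1)) = n := by rw [hbn]; unfold dpos; split_ifs <;> omega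
        have hp : dpos n (t.top i) = n := by rw [hai]; unfold dpos; split_ifs <;> omega
        have hc2 := (col' (i + 1) hik).2
        rcases t.row_top i (i + 1) (by omega) hik with he | hl
        · exact (col' (i + 1) hik).1 (by rw [← he, hai, hbn])
        · omega
      · -- b_{i+1} = -n, a_i = -n
        have hai : t.top i = -n := by omega
        have hq : dpos n (t.bot (i + 1)) = n := by rw [hbn]; unfold dpos; split_ifs <;> omega
        have hp : dpos n (t.top i) = n := by rw [hai]; unfold dpos; split_ifs <;> omega
        have hc1 := (col' i hik').2
        rcases t.row_bot i (i + 1) (by omega) hik with he | hl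
        · exact (col' i hik').1 (by rw [hai, he, hbn])
        · omega
  have hfin := main (k - 1) hk1
  have heq : dpos n (t.bot (k - 1)) = dpos n (-(t.top (k - 1))) := by
    rw [dpos_neg (t.letter_top (k - 1) hk1)]; omega
  rcases dpos_inj (t.letter_bot (k - 1) hk1) (isDLetter_neg (t.letter_top (k - 1) hk1))
      heq with he | ⟨hbn, han⟩ | ⟨hbn, han⟩
  · exact h1.1 he
  · exact (col' (k - 1) hk1).1 (by omega)
  · exact (col' (k - 1) hk1).1 (by omega)

/-- If a classical height-two tableau `t` of width `k < s` has no
adjacent pair of columns satisfying the filling criterion, then either appending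
`s - k` copies of the column `(a_k/ā_k)` or prepending `s - k` copies of `(b̄_1/b_1)`
produces a tableau in `𝒯(s) ∖ B(sϖ₂)`. -/
theorem append_or_prepend (n s k : ℕ) (hn : 2 ≤ n) (hk : 0 < k) (hks : k < s)
    (t : Height2 n k) (hcl : classicalTab t)
    (hnofill : ∀ i, i + 1 < k → ¬ fillCrit t i) :
    (∃ T' : Height2 n s,
        (∀ i < k, T'.top i = t.top i ∧ T'.bot i = t.bot i) ∧
        (∀ i, k ≤ i → i < s → T'.top i = t.top (k - 1) ∧ T'.bot i = -(t.top (k - 1))) ∧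
        affineTab T' ∧ ¬ classicalTab T') ∨
    (∃ T' : Height2 n s,
        (∀ i < s - k, T'.top i = -(t.bot 0) ∧ T'.bot i = t.bot 0) ∧
        (∀ i, s - k ≤ i → i < s →
            T'.top i = t.top (i - (s - k)) ∧ T'.bot i = t.bot (i - (s - k))) ∧
        affineTab T' ∧ ¬ classicalTab T') := by
  have hk1 : k - 1 < k := by omega
  rcases key_dichotomy hn hk t hnofill with hA | hP
  · -- append case
    have hlt := t.letter_top (k - 1) hk1
    have hdle := dpos_le_of_dle hA
    rw [dpos_neg hlt] at hdle
    have colk := t.col (k - 1) hk1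
    unfold dle at colk; push_neg at colk
    have hcolnew : ¬ dle n (-(t.top (k - 1))) (t.top (k - 1)) := by
      unfold dle; push_neg
      constructor
      · intro h; exact hlt.1 (by omega)
      · rw [dpos_neg hlt]; omega
    refine Or.inl ⟨⟨fun i => if i < k then t.top i else t.top (k - 1),
      fun i => if i < k then t.bot i else -(t.top (k - 1)),
      ?_, ?_, ?_, ?_, ?_⟩, ?_, ?_, ?_, ?_⟩
    · intro i hi
      by_cases h : i < k
      · simpa [h] using t.letter_top i h
      · simpa [h] using hlt
    · intro i hi
      by_cases h : i < k
      · simpa [h] using t.letter_bot i h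
      · simpa [h] using isDLetter_neg hlt
    · intro i j hij hj
      by_cases hjk : j < k
      · have hik : i < k := lt_of_le_of_lt hij hjk
        simpa [hik, hjk] using t.row_top i j hij hjk
      · by_cases hik : i < k
        · simpa [hik, hjk] using t.row_top i (k - 1) (by omega) hk1
        · simpa [hik, hjk] using dle_refl n (t.top (k - 1))
    · intro i j hij hj
      by_cases hjk : j < k
      · have hik : i < k := lt_of_le_of_lt hij hjk
        simpa [hik, hjk] using t.row_bot i j hij hjk
      · by_cases hik : i < k
        · simpa [hik, hjk] using dle_trans (t.row_bot i (k - 1) (by omega) hk1) hA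
        · simpa [hik, hjk] using dle_refl n (-(t.top (k - 1)))
    · intro i hi
      by_cases h : i < k
      · simpa [h] using t.col i h
      · simpa [h] using hcolnew
    · intro i hi
      constructor <;> simp [hi]
    · intro i h1 h2
      constructor <;> simp [Nat.not_lt.2 h1]
    · -- affineTab: cond4a
      intro i hi
      by_cases h : i + 1 < k
      · have hik : i < k := by omega
        have h4 := hcl.2.1 i h
        constructor
        · rintro ⟨e1, e2, e3, e4⟩
          dsimp only at e1 e2 e3 e4
          rw [if_pos hik] at e1 e2
          rw [if_pos h] at e3 e4
          exact h4.1 ⟨e1, e2, e3, e4⟩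
        · rintro ⟨e1, e2, e3, e4⟩
          dsimp only at e1 e2 e3 e4
          rw [if_pos hik] at e1 e2
          rw [if_pos h] at e3 e4
          exact h4.2 ⟨e1, e2, e3, e4⟩
      · constructor <;> rintro ⟨e1, e2, e3, e4⟩ <;> dsimp only at e3 e4 <;>
          rw [if_neg h] at e3 e4 <;> omega
    · -- not classical: cond3 fails at column k-1
      intro hc
      refine (hc.1 (k - 1) (by omega)).1 ⟨?_, ?_⟩ <;>
        simp only [show k - 1 + 1 = k from by omega] <;>
        simp [hk1, lt_irrefl]
  · -- prepend case
    have hlb := t.letter_bot 0 hk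
    have hdle := dpos_le_of_dle hP
    rw [dpos_neg hlb] at hdle
    have col0 := t.col 0 hk
    unfold dle at col0; push_neg at col0
    have hcolnew : ¬ dle n (t.bot 0) (-(t.bot 0)) := by
      unfold dle; push_neg
      constructor
      · intro h; exact hlb.1 (by omega)
      · rw [dpos_neg hlb]; omega
    refine Or.inr ⟨⟨fun i => if i < s - k then -(t.bot 0) else t.top (i - (s - k)),
      fun i => if i < s - k then t.bot 0 else t.bot (i - (s - k)),
      ?_, ?_, ?_, ?_, ?_⟩, ?_, ?_, ?_, ?_⟩
    · intro i hi
      by_cases h : i < s - k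
      · simpa [h] using isDLetter_neg hlb
      · simpa [h] using t.letter_top (i - (s - k)) (by omega)
    · intro i hi
      by_cases h : i < s - k
      · simpa [h] using hlb
      · simpa [h] using t.letter_bot (i - (s - k)) (by omega)
    · intro i j hij hj
      by_cases hik : i < s - k
      · by_cases hjk : j < s - k
        · simpa [hik, hjk] using dle_refl n (-(t.bot 0))
        · simpa [hik, hjk] using
            dle_trans hP (t.row_top 0 (j - (s - k)) (Nat.zero_le _) (by omega))
      · have hjk : ¬ j < s - k := by omega
        simpa [hik, hjk] using
          t.row_top (i - (s - k)) (j - (s - k)) (by omega) (by omega)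
    · intro i j hij hj
      by_cases hik : i < s - k
      · by_cases hjk : j < s - k
        · simpa [hik, hjk] using dle_refl n (t.bot 0)
        · simpa [hik, hjk] using t.row_bot 0 (j - (s - k)) (Nat.zero_le _) (by omega)
      · have hjk : ¬ j < s - k := by omega
        simpa [hik, hjk] using
          t.row_bot (i - (s - k)) (j - (s - k)) (by omega) (by omega)
    · intro i hi
      by_cases h : i < s - k
      · simpa [h] using hcolnew
      · simpa [h] using t.col (i - (s - k)) (by omega)
    · intro i hi
      constructor <;> simp [hi]
    · intro i h1 h2
      constructor <;> simp [Nat.not_lt.2 h1]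
    · -- affineTab: cond4a
      intro i hi
      by_cases h : i < s - k
      · constructor <;> rintro ⟨e1, e2, e3, e4⟩ <;> dsimp only at e1 e2 <;>
          rw [if_pos h] at e1 e2 <;> omega
      · have h1' : s - k ≤ i := Nat.not_lt.1 h
        have h2' : i + 1 - (s - k) = (i - (s - k)) + 1 := by omega
        have hnl : ¬ i + 1 < s - k := by omega
        have h4 := hcl.2.1 (i - (s - k)) (by omega)
        constructor
        · rintro ⟨e1, e2, e3, e4⟩
          dsimp only at e1 e2 e3 e4
          rw [if_neg h] at e1 e2
          rw [if_neg hnl, h2'] at e3 e4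
          exact h4.1 ⟨e1, e2, e3, e4⟩
        · rintro ⟨e1, e2, e3, e4⟩
          dsimp only at e1 e2 e3 e4
          rw [if_neg h] at e1 e2
          rw [if_neg hnl, h2'] at e3 e4
          exact h4.2 ⟨e1, e2, e3, e4⟩
    · -- not classical: cond3 fails at column (s-k) - 1
      intro hc
      refine (hc.1 (s - k - 1) (by omega)).2 ⟨?_, ?_⟩ <;>
        simp only [show s - k - 1 + 1 = s - k from by omega] <;>
        simp [show s - k - 1 < s - k from by omega, lt_irrefl, Nat.sub_self]
end

section
/- If a filling location $i_*$ of a height-two classical tableau $t$ satisfies both inequalities $b_{i_*}\le\bar a_{i_*}\le b_{i_*+1}$ and $a_{i_*}\le\bar b_{i_*+1}\le a_{i_*+1}$ simultaneously, then $\bar a_{i_*}=b_{i_*+1}$ and $\bar b_{i_*+1}=a_{i_*}$, so inserting copies of $\binom{a_{i_*}}{\bar a_{i_*}}$ or of $\binom{\bar b_{i_*+1}}{b_{i_*+1}}$ yields the same filled tableau. -/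
/-- `T'` (of width `s`) is obtained from `t` (of width `k`) by inserting `s - k`
copies of the column `c` between columns `p` and `p + 1` of `t`. -/
def insertAt {n k : ℕ} (t : Height2 n k) (p : ℕ) (c : ℤ × ℤ) {s : ℕ}
    (T' : Height2 n s) : Prop :=
  (∀ i < p, T'.top i = t.top i ∧ T'.bot i = t.bot i) ∧
  (∀ i, p ≤ i → i < p + (s - k) → T'.top i = c.1 ∧ T'.bot i = c.2) ∧
  (∀ i, p + (s - k) ≤ i → i < s →
      T'.top i = t.top (i - (s - k)) ∧ T'.bot i = t.bot (i - (s - k)))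

/-- First filling criterion `b_i ≤ ā_i ≤ b_{i+1}` at the interior location `i`
(between 0-based columns `i - 1` and `i`). -/
def crit1 {n k : ℕ} (t : Height2 n k) (i : ℕ) : Prop :=
  dle n (t.bot (i - 1)) (-(t.top (i - 1))) ∧ dle n (-(t.top (i - 1))) (t.bot i)

/-- Second filling criterion `a_i ≤ b̄_{i+1} ≤ a_{i+1}` at the interior location `i`. -/
def crit2 {n k : ℕ} (t : Height2 n k) (i : ℕ) : Prop :=
  dle n (t.top (i - 1)) (-(t.bot i)) ∧ dle n (-(t.bot i)) (t.top i)

/-- The columns the fill map may insert at location `i`: at the boundary locations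
`0` (prepending `(b̄_1/b_1)`) and `k` (appending `(a_k/ā_k)`), or at an interior
location, the column prescribed by whichever filling criterion holds. -/
def choiceAt {n k : ℕ} (t : Height2 n k) (i : ℕ) (c : ℤ × ℤ) : Prop :=
  (i = 0 ∧ c = (-(t.bot 0), t.bot 0)) ∨
  (i = k ∧ c = (t.top (k - 1), -(t.top (k - 1)))) ∨
  (0 < i ∧ i < k ∧
    ((crit1 t i ∧ c = (t.top (i - 1), -(t.top (i - 1)))) ∨
     (crit2 t i ∧ c = (-(t.bot i), t.bot i))))

/-- `i` is a filling location of `t` (relative to target width `s`): some admissible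
insertion there produces an affine tableau in `𝒯(s)`. -/
def fillLoc {n k : ℕ} (t : Height2 n k) (s i : ℕ) : Prop :=
  i ≤ k ∧ ∃ (c : ℤ × ℤ) (T' : Height2 n s),
    choiceAt t i c ∧ insertAt t i c T' ∧ affineTab T'

/-- If an interior filling location `i` of a classical height-two
tableau `t` satisfies both filling criteria simultaneously, then `ā_i = b_{i+1}` and
`b̄_{i+1} = a_i`, so inserting copies of `(a_i/ā_i)` or of `(b̄_{i+1}/b_{i+1})` yields
the same filled tableau. -/
theorem both_criteria_same_fill (n s k : ℕ) (hn : 2 ≤ n) (hk : 0 < k) (hks : k < s)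
    (t : Height2 n k) (hcl : classicalTab t) (i : ℕ) (hi0 : 0 < i) (hik : i < k)
    (h1 : crit1 t i) (h2 : crit2 t i) :
    (-(t.top (i - 1)) = t.bot i ∧ -(t.bot i) = t.top (i - 1)) ∧
    (∀ (T' T'' : Height2 n s),
        insertAt t i (t.top (i - 1), -(t.top (i - 1))) T' →
        insertAt t i (-(t.bot i), t.bot i) T'' →
        ∀ m < s, T'.top m = T''.top m ∧ T'.bot m = T''.bot m) := by
  have hik' : i - 1 < k := by omega
  obtain ⟨ha0, han1, han2⟩ := t.letter_top (i-1) hik'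
  obtain ⟨hb0, hbn1, hbn2⟩ := t.letter_bot i hik
  have key : -(t.top (i-1)) = t.bot i := by
    rcases h1.2 with h | h
    · exact h
    rcases h2.1 with h' | h'
    · omega
    · exfalso
      unfold dpos at h h'
      split_ifs at h h' <;> omega
  refine ⟨⟨key, by omega⟩, ?_⟩
  intro T' T'' hT' hT'' m hm
  rcases lt_or_ge m i with h | h
  · exact ⟨((hT'.1 m h).1).trans ((hT''.1 m h).1).symm,
      ((hT'.1 m h).2).trans ((hT''.1 m h).2).symm⟩
  rcases lt_or_ge m (i + (s - k)) with h2' | h2'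
  · obtain ⟨e1, e2⟩ := hT'.2.1 m h h2'
    obtain ⟨e3, e4⟩ := hT''.2.1 m h h2'
    constructor <;> simp only [e1, e2, e3, e4] <;> omega
  · exact ⟨((hT'.2.2 m h2' hm).1).trans ((hT''.2.2 m h2' hm).1).symm,
      ((hT'.2.2 m h2' hm).2).trans ((hT''.2.2 m h2' hm).2).symm⟩
end

section
/- The crystal $\tilde B^{2,s}\otimes\tilde B^{2,s}$ is connected as a $D_n^{(1)}$-crystal: every vertex $b\otimes b'$ is joined by a path of crystal operators to $u_0\otimes u_0$, where $u_0$ is the unique element of the trivial component $B(0)$. -/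
/-- The Kashiwara operator `f_i` on a two-fold tensor product `b₂ ⊗ b₁ = (b₂, b₁)`
(signature rule): `f_i(b₂ ⊗ b₁) = f_i b₂ ⊗ b₁` if `ε_i(b₂) ≥ φ_i(b₁)`, else
`b₂ ⊗ f_i b₁`. -/
def tensorF {n : ℕ} {B : Type*} (f : Fin (n + 1) → B → Option B)
    (phi eps : Fin (n + 1) → B → ℕ) (i : Fin (n + 1)) (x : B × B) : Option (B × B) :=
  if phi i x.2 ≤ eps i x.1 then (f i x.1).map (fun b => (b, x.2))
  else (f i x.2).map (fun b => (x.1, b))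

/-- `e_i(b₂ ⊗ b₁) = e_i b₂ ⊗ b₁` if `ε_i(b₂) > φ_i(b₁)`, else `b₂ ⊗ e_i b₁`. -/
def tensorE {n : ℕ} {B : Type*} (e : Fin (n + 1) → B → Option B)
    (phi eps : Fin (n + 1) → B → ℕ) (i : Fin (n + 1)) (x : B × B) : Option (B × B) :=
  if phi i x.2 < eps i x.1 then (e i x.1).map (fun b => (b, x.2))
  else (e i x.2).map (fun b => (x.1, b))

/-!
Every vertex is raised to `u₀ ⊗ u₀` by the operators `ẽ_i` of the tensor product.
To apply `ẽ_i` to the right factor, first apply it to the left factor until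
`ε_i(b) ≤ φ_i(b')`; this moves the right factor to `u₀` along any path of `ẽ_i`'s,
in particular along a classical path to some `u_j` followed by `ẽ₀ : u_j ↦ u_{j-1}`.
Since `φ_i(u₀) = 0` for `i ≥ 1`, classical operators then act on the left factor,
taking it to some `u_k`, and `ẽ₀` acts on the left of `u_k ⊗ u₀` because
`φ₀(u₀) = s < s + k = ε₀(u_k)`.
-/

open Relation

def RaisingStep {n : ℕ} {B : Type*} (e : Fin (n + 1) → B → Option B) (a c : B) : Prop :=
  ∃ i, e i a = some c

section TensorSquare

variable {n : ℕ} {B : Type*} {e : Fin (n + 1) → B → Option B} {phi eps : Fin (n + 1) → B → ℕ}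

theorem tensorE_eq_left {i : Fin (n + 1)} {x x' y : B} (h : phi i y < eps i x)
    (hx : e i x = some x') : tensorE e phi eps i (x, y) = some (x', y) := by
  simp [tensorE, h, hx]

theorem tensorE_eq_right {i : Fin (n + 1)} {x y y' : B} (h : eps i x ≤ phi i y)
    (hy : e i y = some y') : tensorE e phi eps i (x, y) = some (x, y') := by
  simp [tensorE, not_lt.mpr h, hy]

theorem reflTransGen_raisingStep_of_chain {v : ℕ → B} {s : ℕ} (i : Fin (n + 1))
    (hv : ∀ k < s, e i (v (k + 1)) = some (v k)) :
    ∀ k ≤ s, ReflTransGen (RaisingStep e) (v k) (v 0) := by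
  intro k hk
  induction k with
  | zero => exact .refl
  | succ k ih => exact .head ⟨i, hv k hk⟩ (ih (by omega))

theorem exists_tensorE_path_to_right
    (heps0 : ∀ i b, eps i b = 0 ↔ e i b = none)
    (hepsS : ∀ i b b', e i b = some b' → eps i b = eps i b' + 1)
    {i : Fin (n + 1)} {y y' : B} (hy : e i y = some y') (x : B) :
    ∃ x', ReflTransGen (RaisingStep (tensorE e phi eps)) (x, y) (x', y') := by
  induction hN : eps i x generalizing x with
  | zero => exact ⟨x, .single ⟨i, tensorE_eq_right (by omega) hy⟩⟩
  | succ N ih =>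
    by_cases h : phi i y < eps i x
    · obtain ⟨x₀, hx₀⟩ := Option.ne_none_iff_exists'.mp
        (mt (heps0 i x).mpr (by omega))
      obtain ⟨x', hpath⟩ := ih x₀ (by have := hepsS i x x₀ hx₀; omega)
      exact ⟨x', .head ⟨i, tensorE_eq_left h hx₀⟩ hpath⟩
    · exact ⟨x, .single ⟨i, tensorE_eq_right (by omega) hy⟩⟩

theorem exists_tensorE_path_of_right
    (heps0 : ∀ i b, eps i b = 0 ↔ e i b = none)
    (hepsS : ∀ i b b', e i b = some b' → eps i b = eps i b' + 1)
    {y z : B} (h : ReflTransGen (RaisingStep e) y z) (x : B) :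
    ∃ x', ReflTransGen (RaisingStep (tensorE e phi eps)) (x, y) (x', z) := by
  induction h with
  | refl => exact ⟨x, .refl⟩
  | tail _ hstep ih =>
    obtain ⟨x', hpath⟩ := ih
    obtain ⟨i, hi⟩ := hstep
    obtain ⟨x'', hpath'⟩ := exists_tensorE_path_to_right heps0 hepsS hi x'
    exact ⟨x'', hpath.trans hpath'⟩

theorem reflTransGen_tensorE_left
    (hepsS : ∀ i b b', e i b = some b' → eps i b = eps i b' + 1)
    {p : Fin (n + 1) → Prop} {y : B} (hy : ∀ i, p i → phi i y = 0) {x z : B}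
    (h : ReflTransGen (fun a c => ∃ i, p i ∧ e i a = some c) x z) :
    ReflTransGen (RaisingStep (tensorE e phi eps)) (x, y) (z, y) := by
  induction h with
  | refl => exact .refl
  | tail _ hstep ih =>
    obtain ⟨i, hi, he⟩ := hstep
    have := hepsS i _ _ he
    exact ih.tail ⟨i, tensorE_eq_left (by rw [hy i hi]; omega) he⟩

end TensorSquare

theorem tensor_square_connected_general (n s : ℕ)
    (B : Type*)
    (f e : Fin (n + 1) → B → Option B)
    (phi eps : Fin (n + 1) → B → ℕ)
    (heps0 : ∀ i b, eps i b = 0 ↔ e i b = none)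
    (hepsS : ∀ i b b', e i b = some b' → eps i b = eps i b' + 1)
    (u : ℕ → B)    -- classical highest weight vectors of the components `B(jϖ₂)`
    (hphiu : ∀ j ≤ s, phi 0 (u j) = s - j ∧ eps 0 (u j) = s + j)
    (he0u : ∀ j, 0 < j → j ≤ s → e 0 (u j) = some (u (j - 1)))
    (hu0 : ∀ i : Fin (n + 1), 0 < (i : ℕ) → phi i (u 0) = 0 ∧ eps i (u 0) = 0)
    (hclass : ∀ b : B, ∃ j ≤ s, Relation.ReflTransGen
        (fun x y => ∃ i : Fin (n + 1), 0 < (i : ℕ) ∧ e i x = some y) b (u j)) :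
    ∀ bb : B × B, Relation.ReflTransGen
      (fun x y => ∃ i : Fin (n + 1),
        tensorF f phi eps i x = some y ∨ tensorF f phi eps i y = some x ∨
        tensorE e phi eps i x = some y ∨ tensorE e phi eps i y = some x)
      bb (u 0, u 0) := by
  rintro ⟨b, b'⟩
  have hu_down : ∀ k ≤ s, ReflTransGen (RaisingStep e) (u k) (u 0) :=
    reflTransGen_raisingStep_of_chain 0 fun k hk => he0u (k + 1) k.succ_pos hk
  obtain ⟨j, hj, hb'⟩ := hclass b'
  obtain ⟨c, hright⟩ := exists_tensorE_path_of_right (phi := phi) heps0 hepsS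
    ((ReflTransGen.mono (fun _ _ ⟨i, _, hi⟩ => ⟨i, hi⟩) _ _ hb').trans (hu_down j hj)) b
  obtain ⟨k, hk, hc⟩ := hclass c
  have hleft := reflTransGen_tensorE_left hepsS (fun i hi => (hu0 i hi).1) hc
  have huu_down : ∀ m ≤ s,
      ReflTransGen (RaisingStep (tensorE e phi eps)) (u m, u 0) (u 0, u 0) :=
    reflTransGen_raisingStep_of_chain (v := fun m => (u m, u 0)) 0 fun m hm => by
      have hphi := (hphiu 0 (Nat.zero_le s)).1
      have heps := (hphiu (m + 1) hm).2
      exact tensorE_eq_left (by omega) (he0u (m + 1) m.succ_pos hm)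
  exact ReflTransGen.mono (fun _ _ ⟨i, hi⟩ => ⟨i, .inr (.inr (.inl hi))⟩) _ _
    (hright.trans (hleft.trans (huu_down k hk)))

/-- The crystal `B̃^{2,s} ⊗ B̃^{2,s}` is connected as a
`D_n^{(1)}`-crystal: every vertex `b ⊗ b'` is joined by a path of crystal operators
to `u₀ ⊗ u₀`, where `u₀` is the unique element of the trivial component `B(0)`.
The hypotheses record the crystal structure of `B̃^{2,s} ≅ ⨁_{k=0}^{s} B(kϖ₂)`:
the string lengths `φ_i, ε_i`; the facts `φ₀(u_j) = s - j`, `ε₀(u_j) = s + j`,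
`e₀(u_j) = u_{j-1}`; that `u₀` spans the trivial classical component; and that every
element can be raised to some classical highest weight vector `u_j` by the classical
operators `e_i`, `i ≥ 1`. -/
theorem tensor_square_connected (n s : ℕ) (hn : 2 ≤ n)
    (B : Type*)
    (f e : Fin (n + 1) → B → Option B)
    (hef : ∀ i a b, f i a = some b ↔ e i b = some a)
    (phi eps : Fin (n + 1) → B → ℕ)
    (hphi0 : ∀ i b, phi i b = 0 ↔ f i b = none)
    (hphiS : ∀ i b b', f i b = some b' → phi i b = phi i b' + 1)
    (heps0 : ∀ i b, eps i b = 0 ↔ e i b = none)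
    (hepsS : ∀ i b b', e i b = some b' → eps i b = eps i b' + 1)
    (u : ℕ → B)    -- classical highest weight vectors of the components `B(jϖ₂)`
    (hphiu : ∀ j ≤ s, phi 0 (u j) = s - j ∧ eps 0 (u j) = s + j)
    (he0u : ∀ j, 0 < j → j ≤ s → e 0 (u j) = some (u (j - 1)))
    (hu0 : ∀ i : Fin (n + 1), 0 < (i : ℕ) → phi i (u 0) = 0 ∧ eps i (u 0) = 0)
    (hclass : ∀ b : B, ∃ j ≤ s, Relation.ReflTransGen
        (fun x y => ∃ i : Fin (n + 1), 0 < (i : ℕ) ∧ e i x = some y) b (u j)) :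
    ∀ bb : B × B, Relation.ReflTransGen
      (fun x y => ∃ i : Fin (n + 1),
        tensorF f phi eps i x = some y ∨ tensorF f phi eps i y = some x ∨
        tensorE e phi eps i x = some y ∨ tensorE e phi eps i y = some x)
      bb (u 0, u 0) :=
  tensor_square_connected_general n s B f e phi eps heps0 hepsS u hphiu he0u hu0 hclass
end

section
/- Let $T$ be a $C_2$ tableau with statistics $A(T)$ = number of $\bar2$'s in the top row, $B(T)$ = (number of $2$'s in the top row) + (number of $\bar1$'s in the bottom row), $C(T)$ = number of $2$'s in the top row, $D(T)$ = number of $\bar2$'s in the bottom row. If $A(T)<B(T)$ and $e_1T\ne0$, then $A(e_1T)=A(T)$, $B(e_1T)=B(T)-1$, and $C(e_1T)-D(e_1T)=C(T)-D(T)-1$; if $A(T)\ge B(T)$ and $e_1T\ne0$, then $A(e_1T)=A(T)+1$, $B(e_1T)=B(T)$, $C(e_1T)=C(T)$, $D(e_1T)=D(T)$. -/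
/-! The `C₂` alphabet `1 < 2 < 2̄ < 1̄`, encoded as the integers `1, 2, -2, -1`. -/

/-- Position of a letter of the `C₂` alphabet: `1 ↦ 1`, `2 ↦ 2`, `2̄ ↦ 3`, `1̄ ↦ 4`. -/
def cpos (x : ℤ) : ℤ := if 0 < x then x else 5 + x

/-- A `C₂` tableau on a two-row Young diagram with row lengths `p ≥ q`:
rows weakly increase, columns strictly increase, no column contains both `1` and `1̄`,
and no configuration with `2` in the top row of a column and `2̄` in the bottom row of
a weakly later column. -/
structure C2Tab (p q : ℕ) where
  hq : q ≤ p
  top : ℕ → ℤ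
  bot : ℕ → ℤ
  htop : ∀ i < p, top i = 1 ∨ top i = 2 ∨ top i = -2 ∨ top i = -1
  hbot : ∀ i < q, bot i = 1 ∨ bot i = 2 ∨ bot i = -2 ∨ bot i = -1
  row_top : ∀ i j, i ≤ j → j < p → cpos (top i) ≤ cpos (top j)
  row_bot : ∀ i j, i ≤ j → j < q → cpos (bot i) ≤ cpos (bot j)
  col_strict : ∀ i < q, cpos (top i) < cpos (bot i)
  no_one_barone : ∀ i < q, ¬ (top i = 1 ∧ bot i = -1)
  no_config : ∀ i j, i ≤ j → j < q → ¬ (top i = 2 ∧ bot j = -2)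

/-- The column word of a `C₂` tableau: for each two-row column, bottom then top entry,
left to right, followed by the one-row entries left to right (length `p + q`). -/
def cword {p q : ℕ} (T : C2Tab p q) (m : ℕ) : ℤ :=
  if m < 2 * q then (if m % 2 = 0 then T.bot (m / 2) else T.top (m / 2)) else T.top (m - q)

/-- The `i`-signature of a letter (colors `i : Fin 2`, with `0` for color 1 and `1` for
color 2): for color 1, `2, 1̄ ↦ +` and `1, 2̄ ↦ −`; for color 2, `2̄ ↦ +`, `2 ↦ −`,
`1, 1̄ ↦ ∗` (recorded as `0`). -/
def csig (i : Fin 2) (x : ℤ) : ℤ :=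
  if i = 0 then (if x = 2 ∨ x = -1 then 1 else -1)
  else (if x = -2 then 1 else if x = 2 then -1 else 0)

def plusCount {p q : ℕ} (T : C2Tab p q) (i : Fin 2) (a b : ℕ) : ℕ :=
  ((Finset.Ico a b).filter (fun m => csig i (cword T m) = 1)).card

def minusCount {p q : ℕ} (T : C2Tab p q) (i : Fin 2) (a b : ℕ) : ℕ :=
  ((Finset.Ico a b).filter (fun m => csig i (cword T m) = -1)).card

/-- Position `m` of the column word carries a `+` of the `i`-signature surviving the
reduction (removal of `+ ∗⋯∗ −` factors). -/
def unmatchedPlus {p q : ℕ} (T : C2Tab p q) (i : Fin 2) (m : ℕ) : Prop :=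
  m < p + q ∧ csig i (cword T m) = 1 ∧
  ∀ j, m < j → j < p + q → minusCount T i (m + 1) (j + 1) ≤ plusCount T i (m + 1) (j + 1)

/-- The Kashiwara operator `e_i` acts at position `m`: the leftmost `+` of the reduced
`i`-signature. -/
def actsAt {p q : ℕ} (T : C2Tab p q) (i : Fin 2) (m : ℕ) : Prop :=
  unmatchedPlus T i m ∧ ∀ m' < m, csig i (cword T m') = 1 → ¬ unmatchedPlus T i m'

/-- The raised value of a letter: `e_1` sends `2 ↦ 1`, `1̄ ↦ 2̄`; `e_2` sends `2̄ ↦ 2`. -/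
def raiseLetter (i : Fin 2) (x : ℤ) : ℤ := if i = 0 then (if x = 2 then 1 else -2) else 2

/-- `e_i T = T'` (in particular `e_i T ≠ 0`). -/
def eRel {p q : ℕ} (i : Fin 2) (T T' : C2Tab p q) : Prop :=
  ∃ m, actsAt T i m ∧ cword T' m = raiseLetter i (cword T m) ∧
    ∀ m', m' < p + q → m' ≠ m → cword T' m' = cword T m'

/-- `A(T)` = number of `2̄`'s in the top row. -/
def Astat {p q : ℕ} (T : C2Tab p q) : ℕ :=
  ((Finset.range p).filter (fun i => T.top i = -2)).card

/-- `B(T)` = number of `2`'s in the top row plus number of `1̄`'s in the bottom row. -/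
def Bstat {p q : ℕ} (T : C2Tab p q) : ℕ :=
  ((Finset.range p).filter (fun i => T.top i = 2)).card +
  ((Finset.range q).filter (fun i => T.bot i = -1)).card

/-- `C(T)` = number of `2`'s in the top row. -/
def Cstat {p q : ℕ} (T : C2Tab p q) : ℕ :=
  ((Finset.range p).filter (fun i => T.top i = 2)).card

/-- `D(T)` = number of `2̄`'s in the bottom row. -/
def Dstat {p q : ℕ} (T : C2Tab p q) : ℕ :=
  ((Finset.range q).filter (fun i => T.bot i = -2)).card
section C2Aux
open Finset

variable {p q : ℕ}

/-- sign of position `k` of the column word, for color 1 -/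
def sg (T : C2Tab p q) (k : ℕ) : ℤ := csig 0 (cword T k)

lemma csig0 (x : ℤ) : csig 0 x = if x = 2 ∨ x = -1 then 1 else -1 := by
  rfl

lemma sg_pm (T : C2Tab p q) (k : ℕ) : sg T k = 1 ∨ sg T k = -1 := by
  rw [sg, csig0]; split <;> simp

lemma sum_sg (T : C2Tab p q) (a b : ℕ) :
    ∑ i ∈ Ico a b, sg T i = (plusCount T 0 a b : ℤ) - (minusCount T 0 a b : ℤ) := by
  classical
  rw [plusCount, minusCount]
  have h := Finset.sum_filter_add_sum_filter_not (Ico a b)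
    (fun i => csig 0 (cword T i) = 1) (fun i => sg T i)
  have h1 : ∑ i ∈ (Ico a b).filter (fun i => csig 0 (cword T i) = 1), sg T i
      = ((Ico a b).filter (fun i => csig 0 (cword T i) = 1)).card • (1 : ℤ) := by
    calc ∑ i ∈ (Ico a b).filter (fun i => csig 0 (cword T i) = 1), sg T i
        = ∑ _i ∈ (Ico a b).filter (fun i => csig 0 (cword T i) = 1), (1:ℤ) :=
          Finset.sum_congr rfl (fun i hi => (Finset.mem_filter.mp hi).2)
      _ = _ := Finset.sum_const 1
  have h2 : (Ico a b).filter (fun i => ¬ csig 0 (cword T i) = 1)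
      = (Ico a b).filter (fun i => csig 0 (cword T i) = -1) := by
    apply Finset.filter_congr
    intro i _
    rcases sg_pm T i with hs | hs <;> rw [sg] at hs <;> simp [hs]
  have h3 : ∑ i ∈ (Ico a b).filter (fun i => csig 0 (cword T i) = -1), sg T i
      = ((Ico a b).filter (fun i => csig 0 (cword T i) = -1)).card • (-1 : ℤ) := by
    calc ∑ i ∈ (Ico a b).filter (fun i => csig 0 (cword T i) = -1), sg T i
        = ∑ _i ∈ (Ico a b).filter (fun i => csig 0 (cword T i) = -1), (-1:ℤ) :=
          Finset.sum_congr rfl (fun i hi => (Finset.mem_filter.mp hi).2)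
      _ = _ := Finset.sum_const (-1)
  rw [h2, h1, h3] at h
  rw [← h]; push_cast; ring
/-- suffix sum of signs from `k` to the end of the word -/
def gs (T : C2Tab p q) (k : ℕ) : ℤ := ∑ i ∈ Ico k (p+q), sg T i

lemma gs_sub (T : C2Tab p q) {a b : ℕ} (hab : a ≤ b) (hb : b ≤ p + q) :
    gs T a - gs T b = ∑ i ∈ Ico a b, sg T i := by
  rw [gs, gs, ← Finset.sum_Ico_consecutive (fun i => sg T i) hab hb]
  ring

lemma gs_end (T : C2Tab p q) : gs T (p+q) = 0 := by
  rw [gs]; simp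

lemma unmatched_iff (T : C2Tab p q) {m : ℕ} (hm : m < p + q) :
    unmatchedPlus T 0 m ↔ ∀ k, m < k → k ≤ p + q → gs T k < gs T m := by
  constructor
  · rintro ⟨-, hcs, hmin⟩ k hk1 hk2
    have hsg : sg T m = 1 := hcs
    have hgm : gs T m - gs T (m+1) = 1 := by
      rw [gs_sub T (Nat.le_succ m) (by omega), Finset.sum_Ico_succ_top (le_refl m),
        Finset.Ico_self, Finset.sum_empty, zero_add, hsg]
    rcases Nat.eq_or_lt_of_le hk1 with he | hk
    · have : k = m + 1 := by omega
      subst this; omega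
    · have hj := hmin (k-1) (by omega) (by omega)
      have hsum : gs T (m+1) - gs T k = ∑ i ∈ Ico (m+1) k, sg T i := gs_sub T (by omega) hk2
      rw [show k - 1 + 1 = k by omega] at hj
      have := sum_sg T (m+1) k
      have hle : (0:ℤ) ≤ (plusCount T 0 (m+1) k : ℤ) - (minusCount T 0 (m+1) k : ℤ) := by
        have : (minusCount T 0 (m+1) k : ℤ) ≤ (plusCount T 0 (m+1) k : ℤ) := by exact_mod_cast hj
        omega
      omega
  · intro h
    have h1 : gs T (m+1) < gs T m := h (m+1) (by omega) (by omega)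
    have hsg1 : gs T m - gs T (m+1) = sg T m := by
      rw [gs_sub T (Nat.le_succ m) (by omega), Finset.sum_Ico_succ_top (le_refl m),
        Finset.Ico_self, Finset.sum_empty, zero_add]
    have hsg : sg T m = 1 := by rcases sg_pm T m with h' | h' <;> omega
    refine ⟨hm, hsg, ?_⟩
    intro j hj1 hj2
    have hk := h (j+1) (by omega) (by omega)
    have hsum : gs T (m+1) - gs T (j+1) = ∑ i ∈ Ico (m+1) (j+1), sg T i :=
      gs_sub T (by omega) (by omega)
    have := sum_sg T (m+1) (j+1)
    have : (minusCount T 0 (m+1) (j+1) : ℤ) ≤ (plusCount T 0 (m+1) (j+1) : ℤ) := by omega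
    exact_mod_cast this

lemma actsAt_intro (T : C2Tab p q) {m : ℕ} (hm : m < p + q)
    (ha : ∀ k, m < k → k ≤ p + q → gs T k < gs T m)
    (hb : ∀ m', m' < m → gs T m' ≤ gs T m) : actsAt T 0 m := by
  refine ⟨(unmatched_iff T hm).mpr ha, ?_⟩
  intro m' hm' _ hun
  have := ((unmatched_iff T (by omega)).mp hun) m hm' (by omega)
  have := hb m' hm'
  omega

lemma actsAt_unique (T : C2Tab p q) {m m' : ℕ} (h : actsAt T 0 m) (h' : actsAt T 0 m') :
    m = m' := by
  rcases lt_trichotomy m m' with hlt | he | hgt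
  · exact absurd h.1 (h'.2 m hlt h.1.2.1)
  · exact he
  · exact absurd h'.1 (h.2 m' hgt h'.1.2.1)

lemma cword_bot (T : C2Tab p q) {i : ℕ} (hi : i < q) : cword T (2*i) = T.bot i := by
  rw [cword, if_pos (by omega), if_pos (by omega)]
  congr 1; omega

lemma cword_topcol (T : C2Tab p q) {i : ℕ} (hi : i < q) : cword T (2*i+1) = T.top i := by
  rw [cword, if_pos (by omega), if_neg (by omega)]
  congr 1; omega

lemma cword_toptail (T : C2Tab p q) {i : ℕ} (h1 : q ≤ i) (h2 : i < p) :
    cword T (q+i) = T.top i := by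
  rw [cword, if_neg (by omega)]
  congr 1; omega

lemma sg_bot (T : C2Tab p q) {i : ℕ} (hi : i < q) : sg T (2*i) = csig 0 (T.bot i) := by
  rw [sg, cword_bot T hi]

lemma sg_topcol (T : C2Tab p q) {i : ℕ} (hi : i < q) : sg T (2*i+1) = csig 0 (T.top i) := by
  rw [sg, cword_topcol T hi]

lemma sg_toptail (T : C2Tab p q) {i : ℕ} (h1 : q ≤ i) (h2 : i < p) :
    sg T (q+i) = csig 0 (T.top i) := by
  rw [sg, cword_toptail T h1 h2]
/-- number of top entries with `cpos ≤ c` -/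
def tc (T : C2Tab p q) (c : ℤ) : ℕ := ((range p).filter (fun i => cpos (T.top i) ≤ c)).card

lemma mem_iff_lt_card {n : ℕ} (P : ℕ → Prop) [DecidablePred P]
    (hdc : ∀ i j, i ≤ j → j < n → P j → P i) {i : ℕ} (hi : i < n) :
    P i ↔ i < ((range n).filter P).card := by
  constructor
  · intro hPi
    have hsub : range (i+1) ⊆ (range n).filter P := by
      intro k hk
      rw [Finset.mem_range] at hk
      rw [Finset.mem_filter, Finset.mem_range]
      exact ⟨by omega, hdc k i (by omega) hi hPi⟩
    have := Finset.card_le_card hsub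
    rw [Finset.card_range] at this
    omega
  · intro hcard
    by_contra hP
    have hsub : (range n).filter P ⊆ range i := by
      intro k hk
      rw [Finset.mem_filter, Finset.mem_range] at hk
      rw [Finset.mem_range]
      by_contra hki
      exact hP (hdc i k (by omega) hk.1 hk.2)
    have := Finset.card_le_card hsub
    rw [Finset.card_range] at this
    omega

lemma topRow_le_iff (T : C2Tab p q) (c : ℤ) {i : ℕ} (hi : i < p) :
    cpos (T.top i) ≤ c ↔ i < tc T c := by
  rw [tc]
  exact mem_iff_lt_card (fun j => cpos (T.top j) ≤ c)
    (fun i j hij hj hPj => le_trans (T.row_top i j hij hj) hPj) hi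

lemma tc_mono (T : C2Tab p q) {c c' : ℤ} (h : c ≤ c') : tc T c ≤ tc T c' := by
  apply Finset.card_le_card
  intro i hi
  rw [Finset.mem_filter] at *
  exact ⟨hi.1, le_trans hi.2 h⟩

lemma tc_le_p (T : C2Tab p q) (c : ℤ) : tc T c ≤ p := by
  have := Finset.card_filter_le (range p) (fun i => cpos (T.top i) ≤ c)
  rwa [Finset.card_range] at this

lemma top_letter_iff (T : C2Tab p q) {i : ℕ} (hi : i < p) :
    (T.top i = 1 ↔ i < tc T 1) ∧ (T.top i = 2 ↔ (tc T 1 ≤ i ∧ i < tc T 2)) ∧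
    (T.top i = -2 ↔ (tc T 2 ≤ i ∧ i < tc T 3)) ∧ (T.top i = -1 ↔ tc T 3 ≤ i) := by
  have h1 := topRow_le_iff T 1 hi
  have h2 := topRow_le_iff T 2 hi
  have h3 := topRow_le_iff T 3 hi
  rcases T.htop i hi with h | h | h | h <;> rw [h] at h1 h2 h3 ⊢ <;>
    norm_num [cpos] at h1 h2 h3 ⊢ <;> omega

lemma top_eq_one_iff (T : C2Tab p q) {i : ℕ} (hi : i < p) : T.top i = 1 ↔ i < tc T 1 :=
  (top_letter_iff T hi).1

lemma top_eq_two_iff (T : C2Tab p q) {i : ℕ} (hi : i < p) :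
    T.top i = 2 ↔ (tc T 1 ≤ i ∧ i < tc T 2) :=
  (top_letter_iff T hi).2.1

lemma top_eq_negtwo_iff (T : C2Tab p q) {i : ℕ} (hi : i < p) :
    T.top i = -2 ↔ (tc T 2 ≤ i ∧ i < tc T 3) :=
  (top_letter_iff T hi).2.2.1

lemma top_eq_negone_iff (T : C2Tab p q) {i : ℕ} (hi : i < p) :
    T.top i = -1 ↔ tc T 3 ≤ i :=
  (top_letter_iff T hi).2.2.2
lemma cpos_one : cpos 1 = 1 := by norm_num [cpos]
lemma cpos_two : cpos 2 = 2 := by norm_num [cpos]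
lemma cpos_negtwo : cpos (-2) = 3 := by norm_num [cpos]
lemma cpos_negone : cpos (-1) = 4 := by norm_num [cpos]

lemma csig_one : csig 0 (1:ℤ) = -1 := by rw [csig0]; norm_num
lemma csig_two : csig 0 (2:ℤ) = 1 := by rw [csig0]; norm_num
lemma csig_negtwo : csig 0 (-2:ℤ) = -1 := by rw [csig0]; norm_num
lemma csig_negone : csig 0 (-1:ℤ) = 1 := by rw [csig0]; norm_num

lemma top_col_ne_negone (T : C2Tab p q) {i : ℕ} (hi : i < q) : T.top i ≠ -1 := by
  intro h
  have hs := T.col_strict i hi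
  rw [h, cpos_negone] at hs
  rcases T.hbot i hi with h' | h' | h' | h' <;> rw [h'] at hs <;>
    simp [cpos_one, cpos_two, cpos_negtwo, cpos_negone] at hs <;> omega

lemma bot_ne_one (T : C2Tab p q) {i : ℕ} (hi : i < q) : T.bot i ≠ 1 := by
  intro h
  have hs := T.col_strict i hi
  rw [h, cpos_one] at hs
  rcases T.htop i (lt_of_lt_of_le hi T.hq) with h' | h' | h' | h' <;> rw [h'] at hs <;>
    simp [cpos_one, cpos_two, cpos_negtwo, cpos_negone] at hs <;> omega

lemma q_le_tc3 (T : C2Tab p q) : q ≤ tc T 3 := by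
  by_contra hq
  push_neg at hq
  have h3 : tc T 3 < q := hq
  have := (top_eq_negone_iff T (lt_of_lt_of_le h3 T.hq)).mpr (le_refl _)
  exact top_col_ne_negone T h3 this

lemma bot_of_top_two (T : C2Tab p q) {i : ℕ} (hi : i < q) (h : T.top i = 2) :
    T.bot i = -1 := by
  have hs := T.col_strict i hi
  rw [h, cpos_two] at hs
  have hnc := T.no_config i i (le_refl i) hi
  rcases T.hbot i hi with h' | h' | h' | h' <;> rw [h'] at hs <;>
    simp [cpos_one, cpos_two, cpos_negtwo, cpos_negone] at hs
  · exact absurd ⟨h, h'⟩ hnc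
  · exact h'

lemma bot_of_top_negtwo (T : C2Tab p q) {i : ℕ} (hi : i < q) (h : T.top i = -2) :
    T.bot i = -1 := by
  have hs := T.col_strict i hi
  rw [h, cpos_negtwo] at hs
  rcases T.hbot i hi with h' | h' | h' | h' <;> rw [h'] at hs <;>
    simp [cpos_one, cpos_two, cpos_negtwo, cpos_negone] at hs
  exact h'

lemma top_of_bot_two (T : C2Tab p q) {i : ℕ} (hi : i < q) (h : T.bot i = 2) :
    T.top i = 1 := by
  have hs := T.col_strict i hi
  rw [h, cpos_two] at hs
  rcases T.htop i (lt_of_lt_of_le hi T.hq) with h' | h' | h' | h' <;> rw [h'] at hs <;>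
    simp [cpos_one, cpos_two, cpos_negtwo, cpos_negone] at hs
  exact h'

lemma top_of_bot_negone (T : C2Tab p q) {i : ℕ} (hi : i < q) (h : T.bot i = -1) :
    T.top i = 2 ∨ T.top i = -2 := by
  have hob := T.no_one_barone i hi
  have hne := top_col_ne_negone T hi
  rcases T.htop i (lt_of_lt_of_le hi T.hq) with h' | h' | h' | h'
  · exact absurd ⟨h', h⟩ hob
  · exact Or.inl h'
  · exact Or.inr h'
  · exact absurd h' hne

/-- value of a column in the signature sum -/
def colval (T : C2Tab p q) (j : ℕ) : ℤ := sg T (2*j) + sg T (2*j+1)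

lemma colval_le (T : C2Tab p q) {j : ℕ} (hj : j < q) :
    colval T j ≤ if T.top j = 2 then 2 else 0 := by
  rw [colval, sg_bot T hj, sg_topcol T hj]
  have hb := sg_pm T (2*j)
  rw [sg_bot T hj] at hb
  rcases T.htop j (lt_of_lt_of_le hj T.hq) with h | h | h | h <;> rw [h]
  · rw [csig_one]; split <;> omega
  · norm_num [csig_two]; omega
  · rw [csig_negtwo]; split <;> omega
  · exact absurd h (top_col_ne_negone T hj)

lemma colval_eq (T : C2Tab p q) {j : ℕ} (hj : j < q) (hja : tc T 1 ≤ j) :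
    colval T j = if T.top j = 2 then 2 else 0 := by
  rw [colval, sg_bot T hj, sg_topcol T hj]
  have hj1 : ¬ T.top j = 1 := by
    rw [top_eq_one_iff T (lt_of_lt_of_le hj T.hq)]; omega
  rcases T.htop j (lt_of_lt_of_le hj T.hq) with h | h | h | h
  · exact absurd h hj1
  · rw [bot_of_top_two T hj h, h, csig_negone, csig_two]; norm_num
  · rw [bot_of_top_negtwo T hj h, h, csig_negone, csig_negtwo]
    have : ¬ (-2 : ℤ) = 2 := by norm_num
    rw [if_neg this]; ring
  · exact absurd h (top_col_ne_negone T hj)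
lemma sum_sg_one (T : C2Tab p q) {a b : ℕ} (h : ∀ k, a ≤ k → k < b → sg T k = 1) :
    ∑ k ∈ Ico a b, sg T k = (b - a : ℕ) := by
  rw [Finset.sum_congr rfl (fun k hk => h k (Finset.mem_Ico.mp hk).1 (Finset.mem_Ico.mp hk).2),
    Finset.sum_const, Nat.card_Ico, nsmul_eq_mul, mul_one]

lemma sum_sg_negone (T : C2Tab p q) {a b : ℕ} (h : ∀ k, a ≤ k → k < b → sg T k = -1) :
    ∑ k ∈ Ico a b, sg T k = -((b - a : ℕ) : ℤ) := by
  rw [Finset.sum_congr rfl (fun k hk => h k (Finset.mem_Ico.mp hk).1 (Finset.mem_Ico.mp hk).2),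
    Finset.sum_const, Nat.card_Ico, nsmul_eq_mul, mul_neg_one]

/-- tail sum in closed form -/
lemma tailsum (T : C2Tab p q) {i j : ℕ} (hqi : q ≤ i) (hij : i ≤ j) (hjp : j ≤ p) :
    ∑ k ∈ Ico (q+i) (q+j), sg T k
      = -((min (max (tc T 1) i) j - i : ℕ) : ℤ)
        + ((min (max (tc T 2) i) j - min (max (tc T 1) i) j : ℕ) : ℤ)
        - ((min (max (tc T 3) i) j - min (max (tc T 2) i) j : ℕ) : ℤ)
        + ((j - min (max (tc T 3) i) j : ℕ) : ℤ) := by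
  have h12 : tc T 1 ≤ tc T 2 := tc_mono T (by norm_num)
  have h23 : tc T 2 ≤ tc T 3 := tc_mono T (by norm_num)
  set c1 := min (max (tc T 1) i) j with hc1
  set c2 := min (max (tc T 2) i) j with hc2
  set c3 := min (max (tc T 3) i) j with hc3
  have hij1 : i ≤ c1 := by omega
  have h1 : c1 ≤ c2 := by omega
  have h2 : c2 ≤ c3 := by omega
  have h3 : c3 ≤ j := by omega
  rw [← Finset.sum_Ico_consecutive (fun k => sg T k)
      (show q+i ≤ q+c1 by omega) (show q+c1 ≤ q+j by omega),
    ← Finset.sum_Ico_consecutive (fun k => sg T k)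
      (show q+c1 ≤ q+c2 by omega) (show q+c2 ≤ q+j by omega),
    ← Finset.sum_Ico_consecutive (fun k => sg T k)
      (show q+c2 ≤ q+c3 by omega) (show q+c3 ≤ q+j by omega)]
  have e1 : ∑ k ∈ Ico (q+i) (q+c1), sg T k = -((q+c1 - (q+i) : ℕ) : ℤ) := by
    apply sum_sg_negone
    intro k hk1 hk2
    have hkq : q ≤ k - q := by omega
    have hkp : k - q < p := by omega
    rw [show k = q + (k - q) by omega, sg_toptail T hkq hkp]
    have : T.top (k - q) = 1 := by
      rw [top_eq_one_iff T hkp]; omega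
    rw [this, csig_one]
  have e2 : ∑ k ∈ Ico (q+c1) (q+c2), sg T k = ((q+c2 - (q+c1) : ℕ) : ℤ) := by
    apply sum_sg_one
    intro k hk1 hk2
    have hkq : q ≤ k - q := by omega
    have hkp : k - q < p := by omega
    rw [show k = q + (k - q) by omega, sg_toptail T hkq hkp]
    have : T.top (k - q) = 2 := by
      rw [top_eq_two_iff T hkp]; omega
    rw [this, csig_two]
  have e3 : ∑ k ∈ Ico (q+c2) (q+c3), sg T k = -((q+c3 - (q+c2) : ℕ) : ℤ) := by
    apply sum_sg_negone
    intro k hk1 hk2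
    have hkq : q ≤ k - q := by omega
    have hkp : k - q < p := by omega
    rw [show k = q + (k - q) by omega, sg_toptail T hkq hkp]
    have : T.top (k - q) = -2 := by
      rw [top_eq_negtwo_iff T hkp]; omega
    rw [this, csig_negtwo]
  have e4 : ∑ k ∈ Ico (q+c3) (q+j), sg T k = ((q+j - (q+c3) : ℕ) : ℤ) := by
    apply sum_sg_one
    intro k hk1 hk2
    have hkq : q ≤ k - q := by omega
    have hkp : k - q < p := by omega
    rw [show k = q + (k - q) by omega, sg_toptail T hkq hkp]
    have : T.top (k - q) = -1 := by
      rw [top_eq_negone_iff T hkp]; omega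
    rw [this, csig_negone]
  rw [e1, e2, e3, e4]
  have : ∀ x y : ℕ, x ≤ y → ((q+y - (q+x) : ℕ) : ℤ) = ((y - x : ℕ) : ℤ) := by
    intro x y hxy; congr 1; omega
  rw [this i c1 hij1, this c1 c2 h1, this c2 c3 h2, this c3 j h3]
  ring

/-- column-region sum as a sum of column values -/
lemma colsum (T : C2Tab p q) (a : ℕ) : ∀ b, a ≤ b → b ≤ q →
    ∑ k ∈ Ico (2*a) (2*b), sg T k = ∑ j ∈ Ico a b, colval T j := by
  intro b
  induction b with
  | zero => intro h1 _; have : a = 0 := by omega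
            subst this; simp
  | succ b ih =>
    intro h1 h2
    rcases Nat.eq_or_lt_of_le h1 with he | hlt
    · rw [← he]; simp
    · have h1' : a ≤ b := by omega
      rw [show 2*(b+1) = (2*b+1)+1 by ring]
      rw [Finset.sum_Ico_succ_top (show 2*a ≤ 2*b+1 by omega),
        Finset.sum_Ico_succ_top (show 2*a ≤ 2*b by omega),
        Finset.sum_Ico_succ_top h1', ih h1' (by omega)]
      rw [colval]
      ring

/-- sum of the column upper bounds -/
lemma colite_sum (T : C2Tab p q) {a b : ℕ} (hab : a ≤ b) (hb : b ≤ q) :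
    ∑ j ∈ Ico a b, (if T.top j = 2 then (2:ℤ) else 0)
      = 2 * ((min (tc T 2) b - max (tc T 1) a : ℕ) : ℤ) := by
  rw [← Finset.sum_filter]
  have hfe : (Ico a b).filter (fun j => T.top j = 2) = Ico (max (tc T 1) a) (min (tc T 2) b) := by
    ext k
    rw [Finset.mem_filter, Finset.mem_Ico, Finset.mem_Ico]
    constructor
    · rintro ⟨⟨hk1, hk2⟩, hk3⟩
      have := (top_eq_two_iff T (by have := T.hq; omega : k < p)).mp hk3
      omega
    · rintro ⟨hk1, hk2⟩
      have hkb : k < b := by omega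
      have := (top_eq_two_iff T (by have := T.hq; omega : k < p)).mpr (by omega)
      exact ⟨⟨by omega, hkb⟩, this⟩
  rw [hfe, Finset.sum_const, Nat.card_Ico, nsmul_eq_mul]
  ring
lemma Cstat_eq (T : C2Tab p q) : Cstat T = tc T 2 - tc T 1 := by
  rw [Cstat]
  have hfe : (range p).filter (fun i => T.top i = 2) = Ico (tc T 1) (tc T 2) := by
    ext k
    rw [Finset.mem_filter, Finset.mem_range, Finset.mem_Ico]
    constructor
    · rintro ⟨hk, hk2⟩
      exact (top_eq_two_iff T hk).mp hk2
    · rintro ⟨hk1, hk2⟩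
      have hkp : k < p := by have := tc_le_p T 2; omega
      exact ⟨hkp, (top_eq_two_iff T hkp).mpr ⟨hk1, hk2⟩⟩
  rw [hfe, Nat.card_Ico]

lemma Astat_eq (T : C2Tab p q) : Astat T = tc T 3 - tc T 2 := by
  rw [Astat]
  have hfe : (range p).filter (fun i => T.top i = -2) = Ico (tc T 2) (tc T 3) := by
    ext k
    rw [Finset.mem_filter, Finset.mem_range, Finset.mem_Ico]
    constructor
    · rintro ⟨hk, hk2⟩
      exact (top_eq_negtwo_iff T hk).mp hk2
    · rintro ⟨hk1, hk2⟩
      have hkp : k < p := by have := tc_le_p T 3; omega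
      exact ⟨hkp, (top_eq_negtwo_iff T hkp).mpr ⟨hk1, hk2⟩⟩
  rw [hfe, Nat.card_Ico]

lemma botm1_iff (T : C2Tab p q) {i : ℕ} (hi : i < q) : T.bot i = -1 ↔ tc T 1 ≤ i := by
  have hip : i < p := lt_of_lt_of_le hi T.hq
  constructor
  · intro h
    rcases top_of_bot_negone T hi h with h' | h'
    · exact ((top_eq_two_iff T hip).mp h').1
    · have := (top_eq_negtwo_iff T hip).mp h'
      have h12 : tc T 1 ≤ tc T 2 := tc_mono T (by norm_num)
      omega
  · intro h
    have hne1 : T.top i ≠ 1 := fun hcontra => by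
      have := (top_eq_one_iff T hip).mp hcontra; omega
    rcases T.htop i hip with h' | h' | h' | h'
    · exact absurd h' hne1
    · exact bot_of_top_two T hi h'
    · exact bot_of_top_negtwo T hi h'
    · exact absurd h' (top_col_ne_negone T hi)

lemma botm1_card (T : C2Tab p q) :
    ((range q).filter (fun i => T.bot i = -1)).card = q - min (tc T 1) q := by
  have hfe : (range q).filter (fun i => T.bot i = -1) = Ico (tc T 1) q := by
    ext k
    rw [Finset.mem_filter, Finset.mem_range, Finset.mem_Ico]
    constructor
    · rintro ⟨hk, hk2⟩
      exact ⟨(botm1_iff T hk).mp hk2, hk⟩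
    · rintro ⟨hk1, hk2⟩
      exact ⟨hk2, (botm1_iff T hk2).mpr hk1⟩
  rw [hfe, Nat.card_Ico]
  omega

lemma Bstat_eq (T : C2Tab p q) : Bstat T = (tc T 2 - tc T 1) + (q - min (tc T 1) q) := by
  rw [Bstat, botm1_card T]
  congr 1
  have := Cstat_eq T
  rw [Cstat] at this
  exact this

lemma card_update {n i0 : ℕ} (hi : i0 < n) (f f' : ℕ → ℤ)
    (hag : ∀ i, i < n → i ≠ i0 → f' i = f i) (c : ℤ) :
    ((range n).filter (fun i => f' i = c)).card + (if f i0 = c then 1 else 0)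
      = ((range n).filter (fun i => f i = c)).card + (if f' i0 = c then 1 else 0) := by
  classical
  have key : ∀ (g : ℕ → ℤ), ((range n).filter (fun i => g i = c)).card
      = (((range n).erase i0).filter (fun i => g i = c)).card + (if g i0 = c then 1 else 0) := by
    intro g
    by_cases hgc : g i0 = c
    · rw [if_pos hgc]
      have he : (range n).filter (fun i => g i = c)
          = insert i0 (((range n).erase i0).filter (fun i => g i = c)) := by
        ext k
        rw [Finset.mem_insert, Finset.mem_filter, Finset.mem_filter, Finset.mem_erase,
          Finset.mem_range]
        constructor
        · rintro ⟨hk1, hk2⟩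
          by_cases hk0 : k = i0
          · exact Or.inl hk0
          · exact Or.inr ⟨⟨hk0, hk1⟩, hk2⟩
        · rintro (rfl | ⟨⟨_, hk1⟩, hk2⟩)
          · exact ⟨hi, hgc⟩
          · exact ⟨hk1, hk2⟩
      rw [he, Finset.card_insert_of_notMem (by simp)]
    · rw [if_neg hgc]
      have he : (range n).filter (fun i => g i = c)
          = ((range n).erase i0).filter (fun i => g i = c) := by
        ext k
        rw [Finset.mem_filter, Finset.mem_filter, Finset.mem_erase, Finset.mem_range]
        constructor
        · rintro ⟨hk1, hk2⟩
          refine ⟨⟨?_, hk1⟩, hk2⟩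
          rintro rfl
          exact hgc hk2
        · rintro ⟨⟨_, hk1⟩, hk2⟩
          exact ⟨hk1, hk2⟩
      rw [he]
      omega
  rw [key f, key f']
  have he2 : ((range n).erase i0).filter (fun i => f' i = c)
      = ((range n).erase i0).filter (fun i => f i = c) := by
    apply Finset.filter_congr
    intro k hk
    rw [Finset.mem_erase, Finset.mem_range] at hk
    rw [hag k hk.2 hk.1]
  rw [he2]
  ring
lemma caseR (T : C2Tab p q) (hBA : Bstat T ≤ Astat T) {m : ℕ} (hacts : actsAt T 0 m) :
    tc T 3 < p ∧ m = q + tc T 3 := by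
  have hqp : q ≤ p := T.hq
  have h12 : tc T 1 ≤ tc T 2 := tc_mono T (by norm_num)
  have h23 : tc T 2 ≤ tc T 3 := tc_mono T (by norm_num)
  have h3p : tc T 3 ≤ p := tc_le_p T 3
  have hq3 : q ≤ tc T 3 := q_le_tc3 T
  have hBA' : (tc T 2 - tc T 1) + (q - min (tc T 1) q) ≤ tc T 3 - tc T 2 := by
    rw [Bstat_eq T, Astat_eq T] at hBA
    exact hBA
  have hMN : q + tc T 3 ≤ p + q := by omega
  -- key bound: all prefixes up to (q + tc T 3) have nonpositive sign sum
  have hb : ∀ m', m' < (q + tc T 3) → gs T m' ≤ gs T (q + tc T 3) := by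
    intro m' hm'
    have hsub : gs T m' - gs T (q + tc T 3) = ∑ k ∈ Ico m' (q + tc T 3), sg T k := gs_sub T (by omega) hMN
    by_cases hcol : m' < 2 * q
    · -- split at 2q
      have hsplit : ∑ k ∈ Ico m' (q + tc T 3), sg T k
          = ∑ k ∈ Ico m' (2*q), sg T k + ∑ k ∈ Ico (2*q) (q + tc T 3), sg T k :=
        (Finset.sum_Ico_consecutive _ (by omega) (by omega)).symm
      have htail : ∑ k ∈ Ico (2*q) (q + tc T 3), sg T k
          = -((min (max (tc T 1) q) (tc T 3) - q : ℕ) : ℤ)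
            + ((min (max (tc T 2) q) (tc T 3) - min (max (tc T 1) q) (tc T 3) : ℕ) : ℤ)
            - ((min (max (tc T 3) q) (tc T 3) - min (max (tc T 2) q) (tc T 3) : ℕ) : ℤ)
            + ((tc T 3 - min (max (tc T 3) q) (tc T 3) : ℕ) : ℤ) := by
        rw [show (2*q : ℕ) = q + q by ring]
        exact tailsum T (le_refl q) hq3 h3p
      obtain ⟨j, hj⟩ : ∃ j, m' = 2*j ∨ m' = 2*j+1 := ⟨m'/2, by omega⟩
      rcases hj with hj | hj
      · have hcs : ∑ k ∈ Ico m' (2*q), sg T k = ∑ j' ∈ Ico j q, colval T j' := by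
          rw [hj]; exact colsum T j q (by omega) (le_refl q)
        have hle : ∑ j' ∈ Ico j q, colval T j'
            ≤ ∑ j' ∈ Ico j q, (if T.top j' = 2 then (2:ℤ) else 0) := by
          apply Finset.sum_le_sum
          intro j' hj'
          rw [Finset.mem_Ico] at hj'
          exact colval_le T hj'.2
        rw [colite_sum T (by omega : j ≤ q) (le_refl q)] at hle
        omega
      · have h2j : 2*(j+1) ≤ 2*q := by omega
        have hbot : ∑ k ∈ Ico m' (2*q), sg T k
            = sg T (2*j+1) + ∑ k ∈ Ico (2*(j+1)) (2*q), sg T k := by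
          rw [hj, Finset.sum_eq_sum_Ico_succ_bot (by omega : 2*j+1 < 2*q)]
          congr 1
        have hcs : ∑ k ∈ Ico (2*(j+1)) (2*q), sg T k = ∑ j' ∈ Ico (j+1) q, colval T j' :=
          colsum T (j+1) q (by omega) (le_refl q)
        have hle : ∑ j' ∈ Ico (j+1) q, colval T j'
            ≤ ∑ j' ∈ Ico (j+1) q, (if T.top j' = 2 then (2:ℤ) else 0) := by
          apply Finset.sum_le_sum
          intro j' hj'
          rw [Finset.mem_Ico] at hj'
          exact colval_le T hj'.2
        rw [colite_sum T (by omega : j+1 ≤ q) (le_refl q)] at hle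
        have hjq : j < q := by omega
        have hsgtop : sg T (2*j+1) = csig 0 (T.top j) := sg_topcol T hjq
        by_cases htj : T.top j = 2
        · have hjt : tc T 1 ≤ j ∧ j < tc T 2 :=
            (top_eq_two_iff T (by omega : j < p)).mp htj
          rw [htj, csig_two] at hsgtop
          omega
        · have hsgneg : csig 0 (T.top j) = -1 := by
            rcases T.htop j (by omega : j < p) with h' | h' | h' | h'
            · rw [h', csig_one]
            · exact absurd h' htj
            · rw [h', csig_negtwo]
            · exact absurd h' (top_col_ne_negone T hjq)
          rw [hsgneg] at hsgtop
          omega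
    · -- tail position
      push_neg at hcol
      obtain ⟨i, rfl⟩ : ∃ i, m' = q + i := ⟨m' - q, by omega⟩
      have htail := tailsum T (show q ≤ i by omega) (show i ≤ tc T 3 by omega) h3p
      omega
  by_cases ht3 : tc T 3 < p
  · -- e1 acts at q + t3
    have hMlt : (q + tc T 3) < p + q := by omega
    have ha : ∀ k, (q + tc T 3) < k → k ≤ p + q → gs T k < gs T (q + tc T 3) := by
      intro k hk1 hk2
      have hsub : gs T (q + tc T 3) - gs T k = ∑ k' ∈ Ico (q + tc T 3) k, sg T k' := gs_sub T (by omega) hk2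
      have hone : ∑ k' ∈ Ico (q + tc T 3) k, sg T k' = ((k - (q + tc T 3) : ℕ) : ℤ) := by
        apply sum_sg_one
        intro k' hk'1 hk'2
        have hq' : q ≤ k' - q := by omega
        have hp' : k' - q < p := by omega
        rw [show k' = q + (k' - q) by omega, sg_toptail T hq' hp']
        have : T.top (k' - q) = -1 := by
          rw [top_eq_negone_iff T hp']; omega
        rw [this, csig_negone]
      have : (0:ℤ) < ((k - (q + tc T 3) : ℕ) : ℤ) := by
        have : 0 < k - (q + tc T 3) := by omega
        exact_mod_cast this
      omega
    have hact2 : actsAt T 0 (q + tc T 3) := actsAt_intro T hMlt ha (fun m' hm' => hb m' hm')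
    exact ⟨ht3, actsAt_unique T hacts hact2⟩
  · -- no -1 in the top row: no unmatched plus at all, contradiction
    exfalso
    have ht3p : tc T 3 = p := by omega
    have hMN' : (q + tc T 3) = p + q := by omega
    have hmlt : m < p + q := hacts.1.1
    have hgm : gs T (p+q) < gs T m := ((unmatched_iff T hmlt).mp hacts.1) (p+q) (by omega) (le_refl _)
    have := hb m (by omega)
    rw [hMN'] at this
    omega
lemma caseL (T : C2Tab p q) (hAB : Astat T < Bstat T) {m : ℕ} (hacts : actsAt T 0 m) :
    (tc T 1 < q ∧ m = 2 * tc T 1 ∧ T.bot (tc T 1) = -1 ∧ T.top (tc T 1) = 2) ∨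
    (q ≤ tc T 1 ∧ tc T 1 < p ∧ m = q + tc T 1 ∧ T.top (tc T 1) = 2) := by
  have hqp : q ≤ p := T.hq
  have h12 : tc T 1 ≤ tc T 2 := tc_mono T (by norm_num)
  have h23 : tc T 2 ≤ tc T 3 := tc_mono T (by norm_num)
  have h3p : tc T 3 ≤ p := tc_le_p T 3
  have hq3 : q ≤ tc T 3 := q_le_tc3 T
  have hAB' : tc T 3 - tc T 2 < (tc T 2 - tc T 1) + (q - min (tc T 1) q) := by
    rw [Bstat_eq T, Astat_eq T] at hAB
    exact hAB
  have ht12 : tc T 1 < tc T 2 := by omega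
  have h1p : tc T 1 < p := by omega
  have htop1 : T.top (tc T 1) = 2 := (top_eq_two_iff T h1p).mpr ⟨le_refl _, ht12⟩
  by_cases h1q : tc T 1 < q
  · -- the leftmost unmatched + is the bottom -1 of the first column with top 2
    left
    have hbot1 : T.bot (tc T 1) = -1 := bot_of_top_two T h1q htop1
    have hmlt : 2 * tc T 1 < p + q := by omega
    have hb : ∀ m', m' < 2 * tc T 1 → gs T m' ≤ gs T (2 * tc T 1) := by
      intro m' hm'
      have hsub : gs T m' - gs T (2 * tc T 1) = ∑ k ∈ Ico m' (2 * tc T 1), sg T k :=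
        gs_sub T (by omega) (by omega)
      obtain ⟨j, hj⟩ : ∃ j, m' = 2*j ∨ m' = 2*j+1 := ⟨m'/2, by omega⟩
      rcases hj with hj | hj
      · have hcs : ∑ k ∈ Ico m' (2 * tc T 1), sg T k = ∑ j' ∈ Ico j (tc T 1), colval T j' := by
          rw [hj]; exact colsum T j (tc T 1) (by omega) (by omega)
        have hle : ∑ j' ∈ Ico j (tc T 1), colval T j'
            ≤ ∑ j' ∈ Ico j (tc T 1), (if T.top j' = 2 then (2:ℤ) else 0) := by
          apply Finset.sum_le_sum
          intro j' hj'
          rw [Finset.mem_Ico] at hj'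
          exact colval_le T (by omega)
        rw [colite_sum T (by omega : j ≤ tc T 1) (by omega)] at hle
        omega
      · have hbotsplit1 : ∑ k ∈ Ico m' (2 * tc T 1), sg T k
            = sg T (2*j+1) + ∑ k ∈ Ico (2*(j+1)) (2 * tc T 1), sg T k := by
          rw [hj, Finset.sum_eq_sum_Ico_succ_bot (by omega : 2*j+1 < 2 * tc T 1)]
          congr 1
        have hcs : ∑ k ∈ Ico (2*(j+1)) (2 * tc T 1), sg T k
            = ∑ j' ∈ Ico (j+1) (tc T 1), colval T j' :=
          colsum T (j+1) (tc T 1) (by omega) (by omega)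
        have hle : ∑ j' ∈ Ico (j+1) (tc T 1), colval T j'
            ≤ ∑ j' ∈ Ico (j+1) (tc T 1), (if T.top j' = 2 then (2:ℤ) else 0) := by
          apply Finset.sum_le_sum
          intro j' hj'
          rw [Finset.mem_Ico] at hj'
          exact colval_le T (by omega)
        rw [colite_sum T (by omega : j+1 ≤ tc T 1) (by omega)] at hle
        have hjq : j < q := by omega
        have hsgtop : sg T (2*j+1) = csig 0 (T.top j) := sg_topcol T hjq
        have htj : T.top j = 1 := by
          rw [top_eq_one_iff T (by omega : j < p)]; omega
        rw [htj, csig_one] at hsgtop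
        omega
    have ha : ∀ k, 2 * tc T 1 < k → k ≤ p + q → gs T k < gs T (2 * tc T 1) := by
      intro k hk1 hk2
      have hsub : gs T (2 * tc T 1) - gs T k = ∑ k' ∈ Ico (2 * tc T 1) k, sg T k' :=
        gs_sub T (by omega) hk2
      by_cases hk2q : k ≤ 2*q
      · obtain ⟨j, hj⟩ : ∃ j, k = 2*j ∨ k = 2*j+1 := ⟨k/2, by omega⟩
        have hcoleq : ∀ b, tc T 1 ≤ b → b ≤ q →
            ∑ j' ∈ Ico (tc T 1) b, colval T j'
              = 2 * ((min (tc T 2) b - max (tc T 1) (tc T 1) : ℕ) : ℤ) := by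
          intro b hb1 hb2
          rw [← colite_sum T hb1 hb2]
          apply Finset.sum_congr rfl
          intro j' hj'
          rw [Finset.mem_Ico] at hj'
          exact colval_eq T (by omega) hj'.1
        rcases hj with hj | hj
        · have hcs : ∑ k' ∈ Ico (2 * tc T 1) k, sg T k' = ∑ j' ∈ Ico (tc T 1) j, colval T j' := by
            rw [hj]; exact colsum T (tc T 1) j (by omega) (by omega)
          rw [hcoleq j (by omega) (by omega)] at hcs
          omega
        · have hjq : j < q := by omega
          have hcs : ∑ k' ∈ Ico (2 * tc T 1) k, sg T k'
              = ∑ j' ∈ Ico (tc T 1) j, colval T j' + sg T (2*j) := by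
            rw [hj, Finset.sum_Ico_succ_top (by omega : 2 * tc T 1 ≤ 2*j),
              colsum T (tc T 1) j (by omega) (by omega)]
          rw [hcoleq j (by omega) (by omega)] at hcs
          have hbj : T.bot j = -1 := (botm1_iff T hjq).mpr (by omega)
          have hsgb : sg T (2*j) = 1 := by
            rw [sg_bot T hjq, hbj, csig_negone]
          omega
      · -- k lands in the tail
        have hsplit : ∑ k' ∈ Ico (2 * tc T 1) k, sg T k'
            = ∑ k' ∈ Ico (2 * tc T 1) (2*q), sg T k' + ∑ k' ∈ Ico (q+q) k, sg T k' := by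
          rw [← Finset.sum_Ico_consecutive (fun k' => sg T k') (by omega : 2 * tc T 1 ≤ 2*q)
            (by omega : 2*q ≤ k), show (2*q : ℕ) = q + q by ring]
        have hcs : ∑ k' ∈ Ico (2 * tc T 1) (2*q), sg T k'
            = ∑ j' ∈ Ico (tc T 1) q, colval T j' := colsum T (tc T 1) q (by omega) (le_refl q)
        have hcoleq : ∑ j' ∈ Ico (tc T 1) q, colval T j'
            = 2 * ((min (tc T 2) q - max (tc T 1) (tc T 1) : ℕ) : ℤ) := by
          rw [← colite_sum T (by omega : tc T 1 ≤ q) (le_refl q)]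
          apply Finset.sum_congr rfl
          intro j' hj'
          rw [Finset.mem_Ico] at hj'
          exact colval_eq T (by omega) hj'.1
        obtain ⟨i, rfl⟩ : ∃ i, k = q + i := ⟨k - q, by omega⟩
        have htail := tailsum T (le_refl q) (show q ≤ i by omega) (show i ≤ p by omega)
        omega
    have hact2 : actsAt T 0 (2 * tc T 1) := actsAt_intro T hmlt ha (fun m' hm' => hb m' hm')
    exact ⟨h1q, actsAt_unique T hacts hact2, hbot1, htop1⟩
  · -- the leftmost unmatched + is the first 2 in the top row (a tail position)
    right
    push_neg at h1q
    have hmlt : q + tc T 1 < p + q := by omega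
    have hb : ∀ m', m' < q + tc T 1 → gs T m' ≤ gs T (q + tc T 1) := by
      intro m' hm'
      have hsub : gs T m' - gs T (q + tc T 1) = ∑ k ∈ Ico m' (q + tc T 1), sg T k :=
        gs_sub T (by omega) (by omega)
      by_cases hcol : m' < 2 * q
      · have hsplit : ∑ k ∈ Ico m' (q + tc T 1), sg T k
            = ∑ k ∈ Ico m' (2*q), sg T k + ∑ k ∈ Ico (q+q) (q + tc T 1), sg T k := by
          rw [← Finset.sum_Ico_consecutive (fun k' => sg T k') (by omega : m' ≤ 2*q)
            (by omega : 2*q ≤ q + tc T 1), show (2*q : ℕ) = q + q by ring]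
        have htail := tailsum T (le_refl q) (show q ≤ tc T 1 by omega) (show tc T 1 ≤ p by omega)
        obtain ⟨j, hj⟩ : ∃ j, m' = 2*j ∨ m' = 2*j+1 := ⟨m'/2, by omega⟩
        rcases hj with hj | hj
        · have hcs : ∑ k ∈ Ico m' (2*q), sg T k = ∑ j' ∈ Ico j q, colval T j' := by
            rw [hj]; exact colsum T j q (by omega) (le_refl q)
          have hle : ∑ j' ∈ Ico j q, colval T j'
              ≤ ∑ j' ∈ Ico j q, (if T.top j' = 2 then (2:ℤ) else 0) := by
            apply Finset.sum_le_sum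
            intro j' hj'
            rw [Finset.mem_Ico] at hj'
            exact colval_le T hj'.2
          rw [colite_sum T (by omega : j ≤ q) (le_refl q)] at hle
          omega
        · have hbotsplit : ∑ k ∈ Ico m' (2*q), sg T k
              = sg T (2*j+1) + ∑ k ∈ Ico (2*(j+1)) (2*q), sg T k := by
            rw [hj, Finset.sum_eq_sum_Ico_succ_bot (by omega : 2*j+1 < 2*q)]
            congr 1
          have hcs : ∑ k ∈ Ico (2*(j+1)) (2*q), sg T k = ∑ j' ∈ Ico (j+1) q, colval T j' :=
            colsum T (j+1) q (by omega) (le_refl q)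
          have hle : ∑ j' ∈ Ico (j+1) q, colval T j'
              ≤ ∑ j' ∈ Ico (j+1) q, (if T.top j' = 2 then (2:ℤ) else 0) := by
            apply Finset.sum_le_sum
            intro j' hj'
            rw [Finset.mem_Ico] at hj'
            exact colval_le T hj'.2
          rw [colite_sum T (by omega : j+1 ≤ q) (le_refl q)] at hle
          have hjq : j < q := by omega
          have hsgtop : sg T (2*j+1) = csig 0 (T.top j) := sg_topcol T hjq
          have htj : T.top j = 1 := by
            rw [top_eq_one_iff T (by omega : j < p)]; omega
          rw [htj, csig_one] at hsgtop
          omega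
      · push_neg at hcol
        obtain ⟨i, rfl⟩ : ∃ i, m' = q + i := ⟨m' - q, by omega⟩
        have htail := tailsum T (show q ≤ i by omega) (show i ≤ tc T 1 by omega)
          (show tc T 1 ≤ p by omega)
        omega
    have ha : ∀ k, q + tc T 1 < k → k ≤ p + q → gs T k < gs T (q + tc T 1) := by
      intro k hk1 hk2
      have hsub : gs T (q + tc T 1) - gs T k = ∑ k' ∈ Ico (q + tc T 1) k, sg T k' :=
        gs_sub T (by omega) hk2
      obtain ⟨i, rfl⟩ : ∃ i, k = q + i := ⟨k - q, by omega⟩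
      have htail := tailsum T (show q ≤ tc T 1 by omega) (show tc T 1 ≤ i by omega)
        (show i ≤ p by omega)
      omega
    have hact2 : actsAt T 0 (q + tc T 1) := actsAt_intro T hmlt ha (fun m' hm' => hb m' hm')
    exact ⟨h1q, by omega, actsAt_unique T hacts hact2, htop1⟩
lemma raise0 (x : ℤ) : raiseLetter 0 x = if x = 2 then 1 else -2 := rfl

end C2Aux
/-- Effect of `e₁` on the statistics `A, B, C, D` of a `C₂` tableau:
if `A(T) < B(T)` then `A` is preserved, `B` drops by one and `C - D` drops by one;
if `A(T) ≥ B(T)` then `A` increases by one and `B, C, D` are preserved. -/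
theorem e1_statistics (p q : ℕ) (T T' : C2Tab p q) (h : eRel 0 T T') :
    (Astat T < Bstat T →
      Astat T' = Astat T ∧ Bstat T' + 1 = Bstat T ∧
      (Cstat T' : ℤ) - Dstat T' = (Cstat T : ℤ) - Dstat T - 1) ∧
    (Bstat T ≤ Astat T →
      Astat T' = Astat T + 1 ∧ Bstat T' = Bstat T ∧
      Cstat T' = Cstat T ∧ Dstat T' = Dstat T) := by
  classical
  obtain ⟨m, hacts, hraise, hoth⟩ := h
  have hqp : q ≤ p := T.hq
  by_cases hAB : Astat T < Bstat T
  · refine ⟨fun _ => ?_, fun hBA => absurd hAB (by omega)⟩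
    rcases caseL T hAB hacts with ⟨h1q, hm, hbot1, htop1⟩ | ⟨hq1, h1p, hm, htop1⟩
    · -- bottom entry tc T 1 changes from -1 to -2
      subst hm
      have htopeq : ∀ i, i < p → T'.top i = T.top i := by
        intro i hi
        by_cases hiq : i < q
        · rw [← cword_topcol T' hiq, ← cword_topcol T hiq]
          exact hoth (2*i+1) (by omega) (by omega)
        · push_neg at hiq
          rw [← cword_toptail T' hiq hi, ← cword_toptail T hiq hi]
          exact hoth (q+i) (by omega) (by omega)
      have hboteq : ∀ i, i < q → i ≠ tc T 1 → T'.bot i = T.bot i := by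
        intro i hi hne
        rw [← cword_bot T' hi, ← cword_bot T hi]
        exact hoth (2*i) (by omega) (by omega)
      have hbotnew : T'.bot (tc T 1) = -2 := by
        rw [← cword_bot T' h1q, hraise, cword_bot T h1q, hbot1, raise0]
        norm_num
      have hA : Astat T' = Astat T := by
        rw [Astat, Astat]
        congr 1
        apply Finset.filter_congr
        intro i hi
        rw [Finset.mem_range] at hi
        rw [htopeq i hi]
      have hC : Cstat T' = Cstat T := by
        rw [Cstat, Cstat]
        congr 1
        apply Finset.filter_congr
        intro i hi
        rw [Finset.mem_range] at hi
        rw [htopeq i hi]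
      have hBb := card_update h1q T.bot T'.bot hboteq (-1)
      rw [hbot1, hbotnew] at hBb
      norm_num at hBb
      have hD := card_update h1q T.bot T'.bot hboteq (-2)
      rw [hbot1, hbotnew] at hD
      norm_num at hD
      have hB : Bstat T' + 1 = Bstat T := by
        rw [Bstat, Bstat]
        have : ((Finset.range p).filter (fun i => T'.top i = 2)).card
            = ((Finset.range p).filter (fun i => T.top i = 2)).card := hC
        omega
      refine ⟨hA, hB, ?_⟩
      rw [Dstat, Dstat] at *
      push_cast
      omega
    · -- top entry tc T 1 (a tail position) changes from 2 to 1
      subst hm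
      have hboteq : ∀ i, i < q → T'.bot i = T.bot i := by
        intro i hi
        rw [← cword_bot T' hi, ← cword_bot T hi]
        exact hoth (2*i) (by omega) (by omega)
      have htopeq : ∀ i, i < p → i ≠ tc T 1 → T'.top i = T.top i := by
        intro i hi hne
        by_cases hiq : i < q
        · rw [← cword_topcol T' hiq, ← cword_topcol T hiq]
          exact hoth (2*i+1) (by omega) (by omega)
        · push_neg at hiq
          rw [← cword_toptail T' hiq hi, ← cword_toptail T hiq hi]
          exact hoth (q+i) (by omega) (by omega)
      have htopnew : T'.top (tc T 1) = 1 := by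
        rw [← cword_toptail T' hq1 h1p, hraise, cword_toptail T hq1 h1p, htop1, raise0]
        norm_num
      have hA : Astat T' = Astat T := by
        have := card_update h1p T.top T'.top htopeq (-2)
        rw [htop1, htopnew] at this
        norm_num at this
        rw [Astat, Astat]
        exact this
      have hC : Cstat T' + 1 = Cstat T := by
        have := card_update h1p T.top T'.top htopeq 2
        rw [htop1, htopnew] at this
        norm_num at this
        rw [Cstat, Cstat]
        omega
      have hbotcard : ∀ c : ℤ, ((Finset.range q).filter (fun i => T'.bot i = c)).card
          = ((Finset.range q).filter (fun i => T.bot i = c)).card := by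
        intro c
        congr 1
        apply Finset.filter_congr
        intro i hi
        rw [Finset.mem_range] at hi
        rw [hboteq i hi]
      have hB : Bstat T' + 1 = Bstat T := by
        rw [Bstat, Bstat, hbotcard (-1)]
        rw [Cstat, Cstat] at hC
        omega
      have hD : Dstat T' = Dstat T := by
        rw [Dstat, Dstat, hbotcard (-2)]
      refine ⟨hA, hB, ?_⟩
      rw [hD]
      push_cast
      omega
  · push_neg at hAB
    refine ⟨fun h' => absurd h' (by omega), fun _ => ?_⟩
    obtain ⟨h3p, hm⟩ := caseR T hAB hacts
    have hq3 : q ≤ tc T 3 := q_le_tc3 T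
    have htop3 : T.top (tc T 3) = -1 := (top_eq_negone_iff T h3p).mpr (le_refl _)
    subst hm
    have hboteq : ∀ i, i < q → T'.bot i = T.bot i := by
      intro i hi
      rw [← cword_bot T' hi, ← cword_bot T hi]
      exact hoth (2*i) (by omega) (by omega)
    have htopeq : ∀ i, i < p → i ≠ tc T 3 → T'.top i = T.top i := by
      intro i hi hne
      by_cases hiq : i < q
      · rw [← cword_topcol T' hiq, ← cword_topcol T hiq]
        exact hoth (2*i+1) (by omega) (by omega)
      · push_neg at hiq
        rw [← cword_toptail T' hiq hi, ← cword_toptail T hiq hi]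
        exact hoth (q+i) (by omega) (by omega)
    have htopnew : T'.top (tc T 3) = -2 := by
      rw [← cword_toptail T' hq3 h3p, hraise, cword_toptail T hq3 h3p, htop3, raise0]
      norm_num
    have hA : Astat T' = Astat T + 1 := by
      have := card_update h3p T.top T'.top htopeq (-2)
      rw [htop3, htopnew] at this
      norm_num at this
      rw [Astat, Astat]
      omega
    have hC : Cstat T' = Cstat T := by
      have := card_update h3p T.top T'.top htopeq 2
      rw [htop3, htopnew] at this
      norm_num at this
      rw [Cstat, Cstat]
      omega
    have hbotcard : ∀ c : ℤ, ((Finset.range q).filter (fun i => T'.bot i = c)).card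
        = ((Finset.range q).filter (fun i => T.bot i = c)).card := by
      intro c
      congr 1
      apply Finset.filter_congr
      intro i hi
      rw [Finset.mem_range] at hi
      rw [hboteq i hi]
    have hB : Bstat T' = Bstat T := by
      rw [Bstat, Bstat, hbotcard (-1), Cstat, Cstat] at *
      omega
    have hD : Dstat T' = Dstat T := by
      rw [Dstat, Dstat, hbotcard (-2)]
    exact ⟨hA, hB, hC, hD⟩
end

section
/- Let $T$ be a $C_2$ tableau with $e_2T\ne0$. If $C(T)<D(T)$ then $e_2$ changes a $\bar2$ in the bottom row to a $2$, and $A(e_2T)=A(T)$, $B(e_2T)=B(T)$, $C(e_2T)=C(T)$, $D(e_2T)=D(T)-1$. If $C(T)\ge D(T)$ then $e_2$ changes a $\bar2$ in the top row to a $2$, and $A(e_2T)=A(T)-1$, $B(e_2T)=B(T)+1$, $C(e_2T)=C(T)+1$, $D(e_2T)=D(T)$. -/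
/-!
In the column word, the letters carrying a `2`-signature come in the order: bottom `2`s (`−`),
bottom `2̄`s (`D` pluses), top `2`s (`C` minuses), top `2̄`s (`A` pluses); this is forced by the
row, column and configuration conditions. Bracketing `+^D −^C`, the leftmost unbracketed `+` is
the first bottom `2̄` when `C < D`, and lies in the top row when `D ≤ C`. Only that one cell
changes, so the statistics can be read off directly.
-/

open Finset

lemma Finset.card_filter_add_ite_eq {α β : Type*} [DecidableEq α] [DecidableEq β]
    {s : Finset α} {f g : α → β} {a : α} (ha : a ∈ s) (hfg : ∀ x ∈ s, x ≠ a → g x = f x)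
    (v : β) :
    #(s.filter (g · = v)) + (if f a = v then 1 else 0) =
      #(s.filter (f · = v)) + (if g a = v then 1 else 0) := by
  have hrest : ∑ x ∈ s.erase a, (if g x = v then 1 else 0) =
      ∑ x ∈ s.erase a, (if f x = v then 1 else 0) :=
    sum_congr rfl fun x hx => by rw [hfg x (mem_of_mem_erase hx) (ne_of_mem_erase hx)]
  rw [card_filter, card_filter, ← add_sum_erase s _ ha, ← add_sum_erase s _ ha, hrest]
  ring

namespace C2Tab

variable {p q : ℕ}

lemma csig_one_eq_one_iff (x : ℤ) : csig 1 x = 1 ↔ x = -2 := by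
  simp only [csig]; split_ifs <;> simp_all

lemma csig_one_eq_neg_one_iff (x : ℤ) : csig 1 x = -1 ↔ x = 2 := by
  simp only [csig]; split_ifs <;> simp_all

/-- Position in the column word of the top entry of column `i`; the bottom entry of a
two-row column `i` sits at `2 * i`. -/
def topPos (q i : ℕ) : ℕ := if i < q then 2 * i + 1 else q + i

lemma topPos_strictMono : StrictMono (topPos q) := fun i j h => by
  unfold topPos; split_ifs <;> omega

lemma topPos_lt_add {i : ℕ} (hq : q ≤ p) (hi : i < p) : topPos q i < p + q := by
  unfold topPos; split_ifs <;> omega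

lemma topPos_ne_two_mul {i j : ℕ} (hj : j < q) : topPos q i ≠ 2 * j := by
  unfold topPos; split_ifs <;> omega

lemma topPos_mod_two_eq_one_or_le (i : ℕ) : topPos q i % 2 = 1 ∨ 2 * q ≤ topPos q i := by
  unfold topPos; split_ifs <;> omega

lemma eq_two_mul_or_eq_topPos {m : ℕ} (hq : q ≤ p) (hm : m < p + q) :
    (∃ i < q, m = 2 * i) ∨ ∃ j < p, m = topPos q j := by
  by_cases h : m < 2 * q ∧ m % 2 = 0
  · exact .inl ⟨m / 2, by omega, by omega⟩
  · by_cases hmq : m < 2 * q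
    · exact .inr ⟨m / 2, by omega, by unfold topPos; rw [if_pos (by omega)]; omega⟩
    · exact .inr ⟨m - q, by omega, by unfold topPos; rw [if_neg (by omega)]; omega⟩

variable (T : C2Tab p q)

lemma cword_two_mul {i : ℕ} (hi : i < q) : cword T (2 * i) = T.bot i := by
  unfold cword
  rw [if_pos ((Nat.mul_lt_mul_left two_pos).2 hi), if_pos (Nat.mul_mod_right 2 i),
    Nat.mul_div_cancel_left _ two_pos]

lemma cword_topPos (i : ℕ) : cword T (topPos q i) = T.top i := by
  unfold cword topPos
  split_ifs <;> first | omega | congr 1; omega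

lemma cword_eq_neg_two_of_actsAt {m : ℕ} (h : actsAt T 1 m) : cword T m = -2 :=
  (csig_one_eq_one_iff _).1 h.1.2.1

lemma lt_of_bot_eq_two_of_bot_eq_neg_two {i k : ℕ} (hi : i < q) (h2 : T.bot i = 2)
    (h3 : T.bot k = -2) : i < k := by
  by_contra! hki
  have := T.row_bot k i hki hi
  rw [h2, h3] at this
  norm_num [cpos] at this

lemma two_mul_lt_topPos_of_top_eq_two {i j : ℕ} (hi : i < q) (hb : T.bot i = -2)
    (ht : T.top j = 2) : 2 * i < topPos q j := by
  have hij : i < j := by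
    by_contra! hji
    exact T.no_config j i hji hi ⟨ht, hb⟩
  unfold topPos; split_ifs <;> omega

lemma two_mul_lt_topPos_of_top_eq_neg_two {i j : ℕ} (hi : i < q) (hb : T.bot i = -2)
    (ht : T.top j = -2) : 2 * i < topPos q j := by
  have hij : i < j := by
    by_contra! hji
    have hrow := T.row_top j i hji (hi.trans_le T.hq)
    have hcol := T.col_strict i hi
    rw [ht] at hrow
    rw [hb] at hcol
    norm_num [cpos] at hrow hcol
    omega
  unfold topPos; split_ifs <;> omega

lemma topPos_lt_topPos {j j' : ℕ} (hj : j < p) (h2 : T.top j = 2) (h3 : T.top j' = -2) :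
    topPos q j < topPos q j' := by
  refine topPos_strictMono (lt_of_not_ge fun hjj => ?_)
  have := T.row_top j' j hjj hj
  rw [h2, h3] at this
  norm_num [cpos] at this

lemma exists_top_eq_two_of_csig_eq_neg_one {k m : ℕ} (hbk : T.bot k = -2) (hkm : 2 * k < m)
    (hm : m < p + q) (hsig : csig 1 (cword T m) = -1) :
    ∃ j < p, m = topPos q j ∧ T.top j = 2 := by
  rw [csig_one_eq_neg_one_iff] at hsig
  rcases eq_two_mul_or_eq_topPos T.hq hm with ⟨i, hi, rfl⟩ | ⟨j, hj, rfl⟩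
  · rw [T.cword_two_mul hi] at hsig
    have := T.lt_of_bot_eq_two_of_bot_eq_neg_two hi hsig hbk
    omega
  · exact ⟨j, hj, rfl, by rwa [cword_topPos] at hsig⟩

lemma exists_bot_eq_neg_two_of_csig_eq_one {j m : ℕ} (hj : j < p) (htj : T.top j = 2)
    (hmj : m ≤ topPos q j) (hm : m < p + q) (hsig : csig 1 (cword T m) = 1) :
    ∃ i < q, m = 2 * i ∧ T.bot i = -2 := by
  rw [csig_one_eq_one_iff] at hsig
  rcases eq_two_mul_or_eq_topPos T.hq hm with ⟨i, hi, rfl⟩ | ⟨j', -, rfl⟩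
  · exact ⟨i, hi, rfl, by rwa [T.cword_two_mul hi] at hsig⟩
  · rw [cword_topPos] at hsig
    have := T.topPos_lt_topPos hj htj hsig
    omega

lemma minusCount_le_Cstat {k a b : ℕ} (hbk : T.bot k = -2) (ha : 2 * k < a) (hb : b ≤ p + q) :
    minusCount T 1 a b ≤ Cstat T := by
  unfold minusCount Cstat
  refine (card_le_card fun m hm => ?_).trans (card_image_le (f := topPos q))
  rw [mem_filter, mem_Ico] at hm
  obtain ⟨j, hj, rfl, htj⟩ :=
    T.exists_top_eq_two_of_csig_eq_neg_one hbk (by omega) (by omega) hm.2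
  exact mem_image_of_mem _ (mem_filter.2 ⟨mem_range.2 hj, htj⟩)

lemma Dstat_le_plusCount_add_one {k j b : ℕ} (hk : k < q) (hbk : T.bot k = -2)
    (hmin : ∀ i < q, T.bot i = -2 → k ≤ i) (htj : T.top j = 2) (hjb : topPos q j < b) :
    Dstat T ≤ plusCount T 1 (2 * k + 1) b + 1 := by
  unfold Dstat plusCount
  rw [← card_erase_add_one (mem_filter.2 ⟨mem_range.2 hk, hbk⟩), add_le_add_iff_right,
    ← card_image_of_injective _ (mul_right_injective₀ two_ne_zero)]
  refine card_le_card fun m hm => ?_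
  obtain ⟨i, hi, rfl⟩ := mem_image.1 hm
  rw [mem_erase, mem_filter, mem_range] at hi
  obtain ⟨hik, hiq, hbi⟩ := hi
  have := hmin i hiq hbi
  have := T.two_mul_lt_topPos_of_top_eq_two hiq hbi htj
  rw [mem_filter, mem_Ico, T.cword_two_mul hiq, csig_one_eq_one_iff]
  exact ⟨⟨by omega, by omega⟩, hbi⟩

lemma Cstat_le_minusCount {i j : ℕ} (hi : i < q) (hbi : T.bot i = -2)
    (hmax : ∀ j' < p, T.top j' = 2 → j' ≤ j) :
    Cstat T ≤ minusCount T 1 (2 * i + 1) (topPos q j + 1) := by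
  unfold Cstat minusCount
  rw [← card_image_of_injective _ (topPos_strictMono (q := q)).injective]
  refine card_le_card fun m hm => ?_
  obtain ⟨j', hj', rfl⟩ := mem_image.1 hm
  rw [mem_filter, mem_range] at hj'
  have := T.two_mul_lt_topPos_of_top_eq_two hi hbi hj'.2
  have := (topPos_strictMono (q := q)).monotone (hmax j' hj'.1 hj'.2)
  rw [mem_filter, mem_Ico, cword_topPos, csig_one_eq_neg_one_iff]
  exact ⟨⟨by omega, by omega⟩, hj'.2⟩

lemma plusCount_add_one_le_Dstat {i j : ℕ} (hi : i < q) (hbi : T.bot i = -2) (hj : j < p)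
    (htj : T.top j = 2) : plusCount T 1 (2 * i + 1) (topPos q j + 1) + 1 ≤ Dstat T := by
  unfold plusCount Dstat
  rw [← card_erase_add_one (mem_filter.2 ⟨mem_range.2 hi, hbi⟩), add_le_add_iff_right]
  refine (card_le_card fun m hm => ?_).trans (card_image_le (f := (2 * ·)))
  rw [mem_filter, mem_Ico] at hm
  have := topPos_lt_add T.hq hj
  obtain ⟨i', hi', rfl, hbi'⟩ :=
    T.exists_bot_eq_neg_two_of_csig_eq_one hj htj (by omega) (by omega) hm.2
  refine mem_image.2 ⟨i', ?_, rfl⟩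
  rw [mem_erase, mem_filter, mem_range]
  exact ⟨by omega, hi', hbi'⟩

lemma unmatchedPlus_two_mul_of_Cstat_lt_Dstat {k : ℕ} (hCD : Cstat T < Dstat T) (hk : k < q)
    (hbk : T.bot k = -2) (hmin : ∀ i < q, T.bot i = -2 → k ≤ i) :
    unmatchedPlus T 1 (2 * k) := by
  have := T.hq
  refine ⟨by omega, by rwa [T.cword_two_mul hk, csig_one_eq_one_iff], fun j hkj hj => ?_⟩
  -- a window containing a `−` reaches a top `2`, hence all bottom `2̄`s but the first
  rcases Nat.eq_zero_or_pos (minusCount T 1 (2 * k + 1) (j + 1)) with h0 | hpos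
  · omega
  obtain ⟨m, hm⟩ := card_pos.1 hpos
  rw [mem_filter, mem_Ico] at hm
  obtain ⟨j', -, rfl, htj'⟩ :=
    T.exists_top_eq_two_of_csig_eq_neg_one hbk (by omega) (by omega) hm.2
  have := T.minusCount_le_Cstat hbk (a := 2 * k + 1) (b := j + 1) (by omega) (by omega)
  have := T.Dstat_le_plusCount_add_one hk hbk hmin htj' (b := j + 1) (by omega)
  omega

lemma not_unmatchedPlus_two_mul_of_Dstat_le_Cstat {i : ℕ} (hDC : Dstat T ≤ Cstat T)
    (hi : i < q) (hbi : T.bot i = -2) : ¬ unmatchedPlus T 1 (2 * i) := by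
  rintro ⟨-, -, hbal⟩
  have hD : 0 < Dstat T := card_pos.2 ⟨i, mem_filter.2 ⟨mem_range.2 hi, hbi⟩⟩
  have hC : (filter (T.top · = 2) (range p)).Nonempty := card_pos.1 (hD.trans_le hDC)
  obtain ⟨hj, htj⟩ := mem_filter.1 (max'_mem _ hC)
  have hmax (j' : ℕ) (hj' : j' < p) (htj' : T.top j' = 2) : j' ≤ max' _ hC :=
    le_max' _ _ (mem_filter.2 ⟨mem_range.2 hj', htj'⟩)
  have := hbal _ (T.two_mul_lt_topPos_of_top_eq_two hi hbi htj)
    (topPos_lt_add T.hq (mem_range.1 hj))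
  have := T.Cstat_le_minusCount hi hbi hmax
  have := T.plusCount_add_one_le_Dstat hi hbi (mem_range.1 hj) htj
  omega

lemma exists_eq_two_mul_of_actsAt_of_Cstat_lt_Dstat (hCD : Cstat T < Dstat T) {m : ℕ}
    (h : actsAt T 1 m) : ∃ i < q, m = 2 * i ∧ T.bot i = -2 := by
  rcases eq_two_mul_or_eq_topPos T.hq h.1.1 with ⟨i, hi, rfl⟩ | ⟨j, -, rfl⟩
  · exact ⟨i, hi, rfl, by rw [← T.cword_two_mul hi]; exact T.cword_eq_neg_two_of_actsAt h⟩
  have htj : T.top j = -2 := by rw [← cword_topPos]; exact T.cword_eq_neg_two_of_actsAt h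
  have hD : (filter (T.bot · = -2) (range q)).Nonempty := card_pos.1 (show 0 < Dstat T by omega)
  obtain ⟨hk, hbk⟩ := mem_filter.1 (min'_mem _ hD)
  have hleft := T.unmatchedPlus_two_mul_of_Cstat_lt_Dstat hCD (mem_range.1 hk) hbk
    fun i hi hbi => min'_le _ _ (mem_filter.2 ⟨mem_range.2 hi, hbi⟩)
  exact (h.2 _ (T.two_mul_lt_topPos_of_top_eq_neg_two (mem_range.1 hk) hbk htj) hleft.2.1
    hleft).elim

lemma exists_eq_topPos_of_actsAt_of_Dstat_le_Cstat (hDC : Dstat T ≤ Cstat T) {m : ℕ}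
    (h : actsAt T 1 m) : ∃ j < p, m = topPos q j ∧ T.top j = -2 := by
  rcases eq_two_mul_or_eq_topPos T.hq h.1.1 with ⟨i, hi, rfl⟩ | ⟨j, hj, rfl⟩
  · have hbi : T.bot i = -2 := by
      rw [← T.cword_two_mul hi]; exact T.cword_eq_neg_two_of_actsAt h
    exact absurd h.1 (T.not_unmatchedPlus_two_mul_of_Dstat_le_Cstat hDC hi hbi)
  · exact ⟨j, hj, rfl, by rw [← cword_topPos]; exact T.cword_eq_neg_two_of_actsAt h⟩

variable {T} {T' : C2Tab p q}

lemma top_eq_of_cword_eq {m : ℕ} (h : ∀ n, n < p + q → n ≠ m → cword T' n = cword T n)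
    {j : ℕ} (hj : j < p) (hjm : topPos q j ≠ m) : T'.top j = T.top j := by
  rw [← cword_topPos, ← cword_topPos, h _ (topPos_lt_add T.hq hj) hjm]

lemma bot_eq_of_cword_eq {m : ℕ} (h : ∀ n, n < p + q → n ≠ m → cword T' n = cword T n)
    {i : ℕ} (hi : i < q) (him : 2 * i ≠ m) : T'.bot i = T.bot i := by
  have := T.hq
  rw [← T'.cword_two_mul hi, ← T.cword_two_mul hi, h _ (by omega) him]

lemma statistics_of_raise_bot {i : ℕ} (hi : i < q) (hb : T.bot i = -2) (hb' : T'.bot i = 2)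
    (htop : ∀ j < p, T'.top j = T.top j) (hbot : ∀ j < q, j ≠ i → T'.bot j = T.bot j) :
    Astat T' = Astat T ∧ Bstat T' = Bstat T ∧ Cstat T' = Cstat T ∧ Dstat T' + 1 = Dstat T := by
  have htop_eq (v : ℤ) : filter (T'.top · = v) (range p) = filter (T.top · = v) (range p) :=
    filter_congr fun j hj => by rw [htop j (mem_range.1 hj)]
  have hbot_card (v : ℤ) := card_filter_add_ite_eq (mem_range.2 hi)
    (fun j hj hji => hbot j (mem_range.1 hj) hji) v
  have h1 := hbot_card (-1)
  have h2 := hbot_card (-2)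
  simp only [hb, hb'] at h1 h2
  norm_num at h1 h2
  unfold Astat Bstat Cstat Dstat
  exact ⟨by rw [htop_eq], by rw [htop_eq, h1], by rw [htop_eq], h2⟩

lemma statistics_of_raise_top {j : ℕ} (hj : j < p) (ht : T.top j = -2) (ht' : T'.top j = 2)
    (htop : ∀ j' < p, j' ≠ j → T'.top j' = T.top j') (hbot : ∀ i < q, T'.bot i = T.bot i) :
    Astat T' + 1 = Astat T ∧ Bstat T' = Bstat T + 1 ∧ Cstat T' = Cstat T + 1 ∧
      Dstat T' = Dstat T := by
  have hbot_eq (v : ℤ) : filter (T'.bot · = v) (range q) = filter (T.bot · = v) (range q) :=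
    filter_congr fun i hi => by rw [hbot i (mem_range.1 hi)]
  have htop_card (v : ℤ) := card_filter_add_ite_eq (mem_range.2 hj)
    (fun j' hj' hne => htop j' (mem_range.1 hj') hne) v
  have h2 := htop_card 2
  have h3 := htop_card (-2)
  simp only [ht, ht'] at h2 h3
  norm_num at h2 h3
  unfold Astat Bstat Cstat Dstat
  refine ⟨h3, ?_, h2, by rw [hbot_eq]⟩
  rw [h2, hbot_eq, add_right_comm]

end C2Tab

open C2Tab in
/-- Effect of `e₂` on a `C₂` tableau `T` with `e₂T ≠ 0`:
if `C(T) < D(T)` then `e₂` changes a `2̄` in the bottom row to a `2` (the acting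
position of the column word is a bottom-row position) and `A, B, C` are preserved
while `D` drops by one; if `C(T) ≥ D(T)` then `e₂` changes a `2̄` in the top row to a
`2`, `A` drops by one, `B` and `C` increase by one, and `D` is preserved. -/
theorem e2_statistics (p q : ℕ) (T T' : C2Tab p q) (h : eRel 1 T T') :
    (Cstat T < Dstat T →
      (∀ m, actsAt T 1 m → m < 2 * q ∧ m % 2 = 0 ∧ cword T m = -2) ∧
      Astat T' = Astat T ∧ Bstat T' = Bstat T ∧
      Cstat T' = Cstat T ∧ Dstat T' + 1 = Dstat T) ∧
    (Dstat T ≤ Cstat T →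
      (∀ m, actsAt T 1 m → (m % 2 = 1 ∨ 2 * q ≤ m) ∧ cword T m = -2) ∧
      Astat T' + 1 = Astat T ∧ Bstat T' = Bstat T + 1 ∧
      Cstat T' = Cstat T + 1 ∧ Dstat T' = Dstat T) := by
  obtain ⟨m, hacts, hraise, hrest⟩ := h
  have hm' : cword T' m = 2 := hraise
  refine ⟨fun hCD => ⟨fun n hn => ?_, ?_⟩, fun hDC => ⟨fun n hn => ?_, ?_⟩⟩
  · obtain ⟨i, hi, rfl, -⟩ := T.exists_eq_two_mul_of_actsAt_of_Cstat_lt_Dstat hCD hn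
    exact ⟨by omega, by omega, T.cword_eq_neg_two_of_actsAt hn⟩
  · obtain ⟨i, hi, rfl, hbi⟩ := T.exists_eq_two_mul_of_actsAt_of_Cstat_lt_Dstat hCD hacts
    exact statistics_of_raise_bot hi hbi (by rwa [← T'.cword_two_mul hi])
      (fun j hj => top_eq_of_cword_eq hrest hj (topPos_ne_two_mul hi))
      (fun j hj hji => bot_eq_of_cword_eq hrest hj (by omega))
  · obtain ⟨j, -, rfl, -⟩ := T.exists_eq_topPos_of_actsAt_of_Dstat_le_Cstat hDC hn
    exact ⟨topPos_mod_two_eq_one_or_le j, T.cword_eq_neg_two_of_actsAt hn⟩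
  · obtain ⟨j, hj, rfl, htj⟩ := T.exists_eq_topPos_of_actsAt_of_Dstat_le_Cstat hDC hacts
    exact statistics_of_raise_top hj htj (by rwa [← T'.cword_topPos])
      (fun j' hj' hne => top_eq_of_cword_eq hrest hj' (topPos_strictMono.injective.ne hne))
      (fun i hi => bot_eq_of_cword_eq hrest hi (topPos_ne_two_mul hi).symm)
end
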